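/- arXiv:2306.10294 — 7 statements merged into one kernel-verified Lean document; each statement's English description precedes it below -/
import Mathlib

section
/- Let F be a finite field and C ⊆ F^n a k-dimensional linear code with two ordered bases A and B. Then for every integer t with 0 ≤ t ≤ k, the number of matrices of rank t in the matrix code of relations C_mat(A) equals the number of matrices of rank t in C_mat(B). -/
/-! A matrix lies in `Cmat v` exactly when it is `C + Cᵀ` for some `C` with
`∑ i j, C i j • v i ⋆ v j = 0`; working with `C` rather than with `M` (whose diagonal is
`2 c i i`) keeps the argument valid in characteristic 2. If `b = P a` is the change of basis,
that quadratic expression satisfies `q_a (Pᵀ C P) = q_b C`, so the congruence `M ↦ Pᵀ M P`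
maps `Cmat b` into `Cmat a`. As `P` is invertible, this congruence is a bijection, and it
preserves rank. -/

open Matrix

/-- Componentwise (Schur) product of two vectors. -/
def schur {F : Type*} [Field F] {n : ℕ} (a b : Fin n → F) : Fin n → F :=
  fun t => a t * b t

/-- The matrix code of quadratic relations associated with the ordered family `v`. -/
def Cmat {F : Type*} [Field F] {n : ℕ} {ι : Type*} [Fintype ι] [LinearOrder ι]
    (v : ι → Fin n → F) : Set (Matrix ι ι F) :=
  { M | ∃ c : ι → ι → F,
      (∑ i : ι, ∑ j : ι, (if i ≤ j then c i j • schur (v i) (v j) else 0)) = 0 ∧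
      (∀ i j : ι, i < j → M i j = c i j ∧ M j i = c i j) ∧
      (∀ i : ι, M i i = 2 * c i i) }

lemma schur_comm {F : Type*} [Field F] {n : ℕ} (a b : Fin n → F) : schur a b = schur b a :=
  funext fun _ => mul_comm _ _

lemma Finset.sum_sum_eq_sum_sum_upper {ι α : Type*} [Fintype ι] [LinearOrder ι]
    [AddCommMonoid α] (f : ι → ι → α) :
    ∑ i, ∑ j, (if i ≤ j then (if i < j then f i j + f j i else f i j) else 0) =
      ∑ i, ∑ j, f i j := by
  have hsplit : ∀ i j, (if i ≤ j then (if i < j then f i j + f j i else f i j) else 0) =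
      (if i ≤ j then f i j else 0) + (if i < j then f j i else 0) := by
    intro i j
    rcases lt_trichotomy i j with h | rfl | h
    · simp [h, h.le]
    · simp
    · simp [h.not_ge, h.not_gt]
  have hswap : ∑ i, ∑ j, (if i < j then f j i else 0) =
      ∑ i, ∑ j, (if j < i then f i j else 0) := Finset.sum_comm
  simp_rw [hsplit, Finset.sum_add_distrib, hswap, ← Finset.sum_add_distrib]
  refine Finset.sum_congr rfl fun i _ => Finset.sum_congr rfl fun j _ => ?_
  rcases le_or_gt i j with h | h
  · simp [h, h.not_gt]
  · simp [h, h.not_ge]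

section SchurForm

variable {F : Type*} [Field F] {n : ℕ} {ι κ : Type*} [Fintype ι] [Fintype κ]

def schurForm (v : ι → Fin n → F) (C : Matrix ι ι F) : Fin n → F :=
  ∑ i, ∑ j, C i j • schur (v i) (v j)

lemma schurForm_apply (v : ι → Fin n → F) (C : Matrix ι ι F) (t : Fin n) :
    schurForm v C t = (fun i => v i t) ⬝ᵥ (C *ᵥ fun i => v i t) := by
  simp only [schurForm, schur, Finset.sum_apply, Pi.smul_apply, smul_eq_mul, dotProduct,
    mulVec, Finset.mul_sum]
  exact Finset.sum_congr rfl fun i _ => Finset.sum_congr rfl fun j _ => by ring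

lemma schurForm_transpose_mul_mul {a : κ → Fin n → F} {b : ι → Fin n → F}
    {P : Matrix ι κ F} (hP : ∀ i, b i = ∑ j, P i j • a j) (C : Matrix ι ι F) :
    schurForm a (Pᵀ * C * P) = schurForm b C := by
  funext t
  have hb : (fun i => b i t) = P *ᵥ fun j => a j t := by
    ext i
    simp [hP, mulVec, dotProduct, Finset.sum_apply]
  rw [schurForm_apply, schurForm_apply, hb, ← mulVec_mulVec, ← mulVec_mulVec,
    dotProduct_mulVec, vecMul_transpose]

variable [LinearOrder ι] [LinearOrder κ]

lemma mem_Cmat_iff {v : ι → Fin n → F} {M : Matrix ι ι F} :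
    M ∈ Cmat v ↔ ∃ C : Matrix ι ι F, schurForm v C = 0 ∧ M = C + Cᵀ := by
  constructor
  · rintro ⟨c, hc, hoff, hdiag⟩
    refine ⟨of fun i j => if i ≤ j then c i j else 0, ?_, ?_⟩
    · refine Eq.trans ?_ hc
      refine Finset.sum_congr rfl fun i _ => Finset.sum_congr rfl fun j _ => ?_
      rw [of_apply, ite_smul, zero_smul]
    · ext i j
      rcases lt_trichotomy i j with h | rfl | h
      · simp [h.le, h.not_ge, (hoff i j h).1]
      · simp [hdiag, two_mul]
      · simp [h.le, h.not_ge, (hoff j i h).2]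
  · rintro ⟨C, hC, rfl⟩
    refine ⟨fun i j => if i < j then C i j + C j i else C i j, ?_, ?_, ?_⟩
    · refine Eq.trans ?_ hC
      rw [schurForm, ← Finset.sum_sum_eq_sum_sum_upper fun i j => C i j • schur (v i) (v j)]
      refine Finset.sum_congr rfl fun i _ => Finset.sum_congr rfl fun j _ => ?_
      split_ifs with _ hlt
      · simp only [if_pos hlt, add_smul, schur_comm (v j)]
      · simp only [if_neg hlt]
      · rfl
    · intro i j h
      simp [h, add_comm]
    · intro i
      simp [two_mul]

lemma transpose_mul_mul_mem_Cmat {a : κ → Fin n → F} {b : ι → Fin n → F}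
    {P : Matrix ι κ F} (hP : ∀ i, b i = ∑ j, P i j • a j) {M : Matrix ι ι F}
    (hM : M ∈ Cmat b) : Pᵀ * M * P ∈ Cmat a := by
  obtain ⟨C, hC, rfl⟩ := mem_Cmat_iff.1 hM
  refine mem_Cmat_iff.2 ⟨Pᵀ * C * P, by rw [schurForm_transpose_mul_mul hP, hC], ?_⟩
  simp [Matrix.mul_add, Matrix.add_mul, transpose_mul, Matrix.mul_assoc]

end SchurForm

lemma Matrix.transpose_mul_mul_transpose_mul_mul_of_mul_eq_one {R : Type*} [CommSemiring R]
    {l m : Type*} [Fintype l] [Fintype m] [DecidableEq l] {P : Matrix l m R}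
    {Q : Matrix m l R} (h : P * Q = 1) (M : Matrix l l R) : Qᵀ * (Pᵀ * M * P) * Q = M := by
  rw [← transpose_transpose M]
  simp only [← transpose_mul, Matrix.mul_assoc, h, Matrix.mul_one]

section ChangeOfBasis

variable {R : Type*} [CommRing R] {ι : Type*} [Fintype ι] [DecidableEq ι]

lemma Matrix.rank_transpose_mul_mul_of_isUnit_det {P : Matrix ι ι R} (hP : IsUnit P.det)
    (M : Matrix ι ι R) : (Pᵀ * M * P).rank = M.rank := by
  rw [rank_mul_eq_left_of_isUnit_det P _ hP,
    rank_mul_eq_right_of_isUnit_det Pᵀ M (by rwa [det_transpose])]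

lemma exists_mul_eq_one_of_span_range_eq {V : Type*} [AddCommGroup V] [Module R V]
    {a b : ι → V} (ha : LinearIndependent R a)
    (hspan : Submodule.span R (Set.range a) = Submodule.span R (Set.range b)) :
    ∃ P Q : Matrix ι ι R, Q * P = 1 ∧ (∀ i, b i = ∑ j, P i j • a j) ∧
      ∀ i, a i = ∑ j, Q i j • b j := by
  have hb : ∀ i, b i ∈ Submodule.span R (Set.range a) :=
    fun i => hspan ▸ Submodule.subset_span ⟨i, rfl⟩
  have ha' : ∀ i, a i ∈ Submodule.span R (Set.range b) :=
    fun i => hspan ▸ Submodule.subset_span ⟨i, rfl⟩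
  choose P hP using fun i => Submodule.mem_span_range_iff_exists_fun R |>.1 (hb i)
  choose Q hQ using fun i => Submodule.mem_span_range_iff_exists_fun R |>.1 (ha' i)
  refine ⟨of P, of Q, ?_, fun i => (hP i).symm, fun i => (hQ i).symm⟩
  refine Matrix.ext fun i => Fintype.linearIndependent_iffₛ.1 ha _ _ ?_
  calc ∑ l, (of Q * of P) i l • a l = ∑ j, Q i j • b j := by
        simp only [mul_apply, of_apply, Finset.sum_smul, ← hP, Finset.smul_sum, smul_smul]
        exact Finset.sum_comm
    _ = ∑ l, (1 : Matrix ι ι R) i l • a l := by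
        simp [hQ, one_apply, ite_smul]

end ChangeOfBasis

theorem cmat_rank_distribution_invariant_general {F : Type*} [Field F] {n k : ℕ}
    (a b : Fin k → Fin n → F)
    (ha : LinearIndependent F a)
    (hspan : Submodule.span F (Set.range a) = Submodule.span F (Set.range b)) :
    ∀ t : ℕ, t ≤ k →
      Nat.card {M : Matrix (Fin k) (Fin k) F // M ∈ Cmat a ∧ M.rank = t} =
        Nat.card {M : Matrix (Fin k) (Fin k) F // M ∈ Cmat b ∧ M.rank = t} := by
  intro t _
  obtain ⟨P, Q, hQP, hP, hQ⟩ := exists_mul_eq_one_of_span_range_eq ha hspan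
  have hPQ : P * Q = 1 := mul_eq_one_comm.1 hQP
  let e : Matrix (Fin k) (Fin k) F ≃ Matrix (Fin k) (Fin k) F :=
    ⟨fun M => Pᵀ * M * P, fun M => Qᵀ * M * Q,
      transpose_mul_mul_transpose_mul_mul_of_mul_eq_one hPQ,
      transpose_mul_mul_transpose_mul_mul_of_mul_eq_one hQP⟩
  refine Nat.card_congr (e.subtypeEquiv fun M => ?_).symm
  change M ∈ Cmat b ∧ M.rank = t ↔ Pᵀ * M * P ∈ Cmat a ∧ (Pᵀ * M * P).rank = t
  rw [rank_transpose_mul_mul_of_isUnit_det (isUnit_det_of_left_inverse hQP)]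
  refine and_congr_left' ⟨transpose_mul_mul_mem_Cmat hP, fun h => ?_⟩
  simpa only [transpose_mul_mul_transpose_mul_mul_of_mul_eq_one hPQ] using
    transpose_mul_mul_mem_Cmat hQ h

/-- If `A` and `B` are two ordered bases of the same `k`-dimensional
linear code `C ⊆ F^n` over a finite field `F`, then for every `0 ≤ t ≤ k`, the number
of matrices of rank `t` in `C_mat(A)` equals the number of matrices of rank `t` in
`C_mat(B)`. -/
theorem cmat_rank_distribution_invariant {F : Type*} [Field F] [Fintype F] {n k : ℕ}
    (a b : Fin k → Fin n → F)
    (ha : LinearIndependent F a) (hb : LinearIndependent F b)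
    (hspan : Submodule.span F (Set.range a) = Submodule.span F (Set.range b)) :
    ∀ t : ℕ, t ≤ k →
      Nat.card {M : Matrix (Fin k) (Fin k) F // M ∈ Cmat a ∧ M.rank = t} =
        Nat.card {M : Matrix (Fin k) (Fin k) F // M ∈ Cmat b ∧ M.rank = t} :=
  cmat_rank_distribution_invariant_general a b ha hspan
end

section
/- Assume q is a power of 2. Let l ∈ {0,…,m−1} and let a, b, c ∈ {0,…,r−1} be pairwise distinct with a + b = 2c. Index rows and columns of rm×rm matrices by the pairs (j,i) ordering the canonical family A. Then the symmetric rm×rm matrix M over F_{q^m} with entries M_{(l,a),(l,b)} = M_{(l,b),(l,a)} = 1 and all other entries zero belongs to the matrix code of relations C_mat(A), and M has rank 2. -/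
open Matrix

/-- Linear order on the index pairs `(j,i)` of the canonical family. -/
noncomputable instance pairLO (m r : ℕ) : LinearOrder (Fin m × Fin r) :=
  LinearOrder.lift' (fun p => finProdFinEquiv p) finProdFinEquiv.injective

/-- Let `q` be a power of `2`, `F` a field with `q^m` elements and `A`
the canonical family `a_{(j,i)} = (x^i y)^{q^j}` (assumed linearly independent).
If `l ∈ {0,…,m−1}` and `a,b,c ∈ {0,…,r−1}` are pairwise distinct with `a + b = 2c`,
then the symmetric matrix `M` with `M_{(l,a),(l,b)} = M_{(l,b),(l,a)} = 1` and all other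
entries `0` belongs to `C_mat(A)` and has rank `2`. -/
theorem cmat_rank_two_char_two
    (q m r nn : ℕ) (hq : ∃ e : ℕ, 0 < e ∧ q = 2 ^ e)
    (hm : 0 < m) (hr : 0 < r) (hn : 0 < nn)
    (F : Type*) [Field F] [Fintype F] (hF : Fintype.card F = q ^ m)
    (x y : Fin nn → F) (hx : Function.Injective x) (hy : ∀ t, y t ≠ 0)
    (A : Fin m × Fin r → Fin nn → F)
    (hA : A = fun p t => (x t ^ (p.2 : ℕ) * y t) ^ q ^ (p.1 : ℕ))
    (hAind : LinearIndependent F A)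
    (l : Fin m) (a b c : Fin r)
    (hab : a ≠ b) (hac : a ≠ c) (hbc : b ≠ c)
    (habc : (a : ℕ) + (b : ℕ) = 2 * (c : ℕ))
    (M : Matrix (Fin m × Fin r) (Fin m × Fin r) F)
    (hM : M = fun p p' =>
      if (p = (l, a) ∧ p' = (l, b)) ∨ (p = (l, b) ∧ p' = (l, a)) then 1 else 0) :
    M ∈ Cmat A ∧ M.rank = 2 := by
  classical
  -- characteristic 2
  have h2 : (2 : F) = 0 := by
    obtain ⟨e, he, rfl⟩ := hq
    haveI := ringChar.charP F
    obtain ⟨n, hp, hcard⟩ := FiniteField.card F (ringChar F)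
    have hdvd : ringChar F ∣ (2 ^ e) ^ m := by
      rw [← hF, hcard]
      exact dvd_pow_self _ n.pos.ne'
    have h2' := (Nat.prime_dvd_prime_iff_eq hp Nat.prime_two).mp
      (hp.dvd_of_dvd_pow (hp.dvd_of_dvd_pow hdvd))
    have := CharP.cast_eq_zero F (ringChar F)
    rw [h2'] at this
    exact_mod_cast this
  have hlab : ((l, a) : Fin m × Fin r) ≠ (l, b) := by simp [Prod.ext_iff, hab]
  have hlac : ((l, a) : Fin m × Fin r) ≠ (l, c) := by simp [Prod.ext_iff, hac]
  have hlbc : ((l, b) : Fin m × Fin r) ≠ (l, c) := by simp [Prod.ext_iff, hbc]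
  -- the key Schur identity
  have hkey : schur (A (l, a)) (A (l, b)) = schur (A (l, c)) (A (l, c)) := by
    funext t
    simp only [hA, schur]
    rw [← mul_pow, ← mul_pow]
    congr 1
    have hxx : x t ^ (a : ℕ) * x t ^ (b : ℕ) = x t ^ (c : ℕ) * x t ^ (c : ℕ) := by
      rw [← pow_add, ← pow_add, habc, two_mul]
    linear_combination (y t ^ 2) * hxx
  constructor
  · -- membership in Cmat
    refine ⟨fun p p' => M p p' + (if p = (l, c) ∧ p' = (l, c) then 1 else 0), ?_, ?_, ?_⟩
    · -- the quadratic relation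
      set cc : (Fin m × Fin r) → (Fin m × Fin r) → F :=
        fun p p' => M p p' + (if p = (l, c) ∧ p' = (l, c) then 1 else 0) with hcc
      rw [← Finset.sum_product']
      set S : Finset ((Fin m × Fin r) × (Fin m × Fin r)) :=
        {((l, a), (l, b)), ((l, b), (l, a)), ((l, c), (l, c))} with hS
      rw [Finset.univ_product_univ]
      refine Eq.trans (Finset.sum_subset (Finset.subset_univ S) ?_).symm ?_
      · intro p hp hpS
        have hz : cc p.1 p.2 = 0 := by
          simp only [hS, Finset.mem_insert, Finset.mem_singleton] at hpS
          push_neg at hpS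
          obtain ⟨h1, h2', h3⟩ := hpS
          simp only [hcc, hM]
          rw [if_neg, if_neg]
          · simp
          · intro h
            exact h3 (Prod.ext h.1 h.2)
          · rintro (⟨ha', hb'⟩ | ⟨hb', ha'⟩)
            · exact h1 (by rw [← ha', ← hb'])
            · exact h2' (by rw [← ha', ← hb'])
        rw [hz]
        simp
      · have e12 : (((l,a),(l,b)) : (Fin m × Fin r) × (Fin m × Fin r)) ≠ ((l,b),(l,a)) := by
          simp [Prod.ext_iff, hab]
        have e13 : (((l,a),(l,b)) : (Fin m × Fin r) × (Fin m × Fin r)) ≠ ((l,c),(l,c)) := by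
          simp [Prod.ext_iff, hac]
        have e23 : (((l,b),(l,a)) : (Fin m × Fin r) × (Fin m × Fin r)) ≠ ((l,c),(l,c)) := by
          simp [Prod.ext_iff, hbc]
        rw [hS, Finset.sum_insert (by simp [e12, e13]), Finset.sum_insert (by simp [e23]),
          Finset.sum_singleton]
        have hc1 : cc (l,a) (l,b) = 1 := by
          simp [hcc, hM, Prod.ext_iff, hab, hac, hbc, Ne.symm hab, Ne.symm hac, Ne.symm hbc]
        have hc2 : cc (l,b) (l,a) = 1 := by
          simp [hcc, hM, Prod.ext_iff, hab, hac, hbc, Ne.symm hab, Ne.symm hac, Ne.symm hbc]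
        have hc3 : cc (l,c) (l,c) = 1 := by
          simp [hcc, hM, Prod.ext_iff, hab, hac, hbc, Ne.symm hab, Ne.symm hac, Ne.symm hbc]
        simp only [hc1, hc2, hc3, one_smul]
        have hschur_symm : schur (A (l,b)) (A (l,a)) = schur (A (l,a)) (A (l,b)) := by
          funext t; simp [schur, mul_comm]
        have hskey' : schur (A (l,a)) (A (l,b)) + schur (A (l,c)) (A (l,c)) = 0 := by
          rw [hkey]; funext t; simp [schur, ← two_mul, h2]
        have hskey : schur (A (l,b)) (A (l,a)) + schur (A (l,c)) (A (l,c)) = 0 := by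
          rw [hschur_symm]; exact hskey'
        split_ifs with h1 h2 h3 h4 h5 h6 h7
        · have h1' : finProdFinEquiv ((l,a) : Fin m × Fin r) ≤ finProdFinEquiv ((l,b) : Fin m × Fin r) := h1
          have h2' : finProdFinEquiv ((l,b) : Fin m × Fin r) ≤ finProdFinEquiv ((l,a) : Fin m × Fin r) := h2
          exact absurd (finProdFinEquiv.injective (le_antisymm h1' h2')) hlab
        · exact (h3 (le_refl (finProdFinEquiv ((l,c) : Fin m × Fin r)))).elim
        · rw [zero_add]; exact hskey'
        · exact (h4 (le_refl (finProdFinEquiv ((l,c) : Fin m × Fin r)))).elim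
        · rw [zero_add]; exact hskey
        · exact (h6 (le_refl (finProdFinEquiv ((l,c) : Fin m × Fin r)))).elim
        · have h1' : ¬ finProdFinEquiv ((l,a) : Fin m × Fin r) ≤ finProdFinEquiv ((l,b) : Fin m × Fin r) := h1
          have h5' : ¬ finProdFinEquiv ((l,b) : Fin m × Fin r) ≤ finProdFinEquiv ((l,a) : Fin m × Fin r) := h5
          exact (h5' (le_of_not_ge h1')).elim
        · have h1' : ¬ finProdFinEquiv ((l,a) : Fin m × Fin r) ≤ finProdFinEquiv ((l,b) : Fin m × Fin r) := h1
          have h5' : ¬ finProdFinEquiv ((l,b) : Fin m × Fin r) ≤ finProdFinEquiv ((l,a) : Fin m × Fin r) := h5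
          exact (h5' (le_of_not_ge h1')).elim
    · intro i j hij
      beta_reduce
      have hsymm : M j i = M i j := by
        rw [hM]; exact if_congr (by tauto) rfl rfl
      have hne : ¬ (i = (l, c) ∧ j = (l, c)) := by
        rintro ⟨rfl, rfl⟩
        have h' : finProdFinEquiv ((l,c) : Fin m × Fin r) < finProdFinEquiv ((l,c) : Fin m × Fin r) := hij
        exact absurd h' (lt_irrefl _)
      rw [if_neg hne]
      exact ⟨(add_zero _).symm, by rw [hsymm, add_zero]⟩
    · intro i
      beta_reduce
      have hMii : M i i = 0 := by
        rw [hM]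
        simp only
        rw [if_neg]
        rintro (⟨h1, h2'⟩ | ⟨h1, h2'⟩) <;> exact hlab (h1 ▸ h2' ▸ rfl)
      rw [hMii, h2, zero_mul]
  · -- rank
    have hmul : ∀ v : Fin m × Fin r → F,
        M.mulVec v = v (l, b) • (Pi.single (l, a) (1 : F) : (Fin m × Fin r) → F) + v (l, a) • (Pi.single (l, b) (1 : F) : (Fin m × Fin r) → F) := by
      intro v
      funext p
      simp only [Matrix.mulVec, dotProduct, hM, Pi.add_apply, Pi.smul_apply, smul_eq_mul]
      by_cases hpa : p = (l, a)
      · subst hpa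
        rw [Pi.single_eq_same, Pi.single_eq_of_ne' hlab.symm]
        rw [Finset.sum_eq_single ((l, b) : Fin m × Fin r)]
        · simp [hlab]
        · intro q _ hq
          rw [if_neg, zero_mul]
          rintro (⟨-, h⟩ | ⟨h, -⟩)
          · exact hq h
          · exact hlab h
        · intro h; exact absurd (Finset.mem_univ _) h
      · by_cases hpb : p = (l, b)
        · subst hpb
          rw [Pi.single_eq_same, Pi.single_eq_of_ne' hlab]
          rw [Finset.sum_eq_single ((l, a) : Fin m × Fin r)]
          · simp [hlab.symm]
          · intro q _ hq
            rw [if_neg, zero_mul]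
            rintro (⟨h, -⟩ | ⟨-, h⟩)
            · exact hlab.symm h
            · exact hq h
          · intro h; exact absurd (Finset.mem_univ _) h
        · rw [Pi.single_eq_of_ne' (Ne.symm hpa), Pi.single_eq_of_ne' (Ne.symm hpb)]
          rw [Finset.sum_eq_zero]
          · simp
          · intro q _
            rw [if_neg, zero_mul]
            rintro (⟨h, -⟩ | ⟨h, -⟩)
            · exact hpa h
            · exact hpb h
    have hrange : LinearMap.range M.mulVecLin =
        Submodule.span F (Set.range ![Pi.single ((l, a) : Fin m × Fin r) (1 : F),
          Pi.single (l, b) 1]) := by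
      have m1 : (Pi.single (l, a) (1 : F) : (Fin m × Fin r) → F) ∈
          Set.range ![(Pi.single (l, a) (1 : F) : (Fin m × Fin r) → F),
            (Pi.single (l, b) (1 : F) : (Fin m × Fin r) → F)] := ⟨0, rfl⟩
      have m2 : (Pi.single (l, b) (1 : F) : (Fin m × Fin r) → F) ∈
          Set.range ![(Pi.single (l, a) (1 : F) : (Fin m × Fin r) → F),
            (Pi.single (l, b) (1 : F) : (Fin m × Fin r) → F)] := ⟨1, rfl⟩
      have r1 : (Pi.single (l, a) (1 : F) : (Fin m × Fin r) → F) ∈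
          LinearMap.range M.mulVecLin := by
        refine ⟨(Pi.single (l, b) 1 : (Fin m × Fin r) → F), ?_⟩
        rw [Matrix.mulVecLin_apply, hmul, Pi.single_eq_same,
          Pi.single_eq_of_ne' hlab.symm, one_smul, zero_smul, add_zero]
      have r2 : (Pi.single (l, b) (1 : F) : (Fin m × Fin r) → F) ∈
          LinearMap.range M.mulVecLin := by
        refine ⟨(Pi.single (l, a) 1 : (Fin m × Fin r) → F), ?_⟩
        rw [Matrix.mulVecLin_apply, hmul, Pi.single_eq_same,
          Pi.single_eq_of_ne' hlab, one_smul, zero_smul, zero_add]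
      apply le_antisymm
      · rintro w ⟨v, rfl⟩
        rw [Matrix.mulVecLin_apply, hmul]
        exact Submodule.add_mem _ (Submodule.smul_mem _ _ (Submodule.subset_span m1))
          (Submodule.smul_mem _ _ (Submodule.subset_span m2))
      · rw [Submodule.span_le]
        rintro w ⟨i, rfl⟩
        fin_cases i
        · exact r1
        · exact r2
    have hli : LinearIndependent F ![(Pi.single (l, a) (1 : F) : (Fin m × Fin r) → F),
        (Pi.single (l, b) (1 : F) : (Fin m × Fin r) → F)] := by
      rw [LinearIndependent.pair_iff]
      intro s t hst
      constructor
      · have := congrFun hst (l, a)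
        simpa [Pi.single_eq_same, Pi.single_eq_of_ne' hlab.symm] using this
      · have := congrFun hst (l, b)
        simpa [Pi.single_eq_same, Pi.single_eq_of_ne' hlab] using this
    rw [Matrix.rank, hrange, finrank_span_eq_card hli]
    simp
end

section
/- Let q = 2, let Γ ∈ F_{2^m}[z] be a square-free polynomial of degree r with Γ(x_i) ≠ 0 for all i, and let y := (1/Γ(x_1),…,1/Γ(x_n)). Assume the canonical family A built from x and y is a basis of the F_{2^m}-linear span of the dual Goppa code Goppa(x,Γ)^⊥ inside F_{2^m}^n. Then every symmetric rm×rm matrix over F_{2^m} with zero diagonal which is block-diagonal with m diagonal blocks of size r×r (i.e., whose entry in position ((j,i),(j',i')) is zero whenever j ≠ j', rows and columns being indexed by the pairs ordering A) belongs to the matrix code of relations C_mat(A). -/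
open Matrix

/-- The generalized Reed–Solomon code `GRS_k(x,y)` (as a subset of `F^n`). -/
def GRSset {F : Type*} [Field F] {n : ℕ} (k : ℕ) (x y : Fin n → F) : Set (Fin n → F) :=
  { w | ∃ P : Polynomial F, P.degree < (k : WithBot ℕ) ∧ w = fun t => y t * P.eval (x t) }

/-- The binary Goppa code `Goppa(x,Γ) = GRS_r(x,y)^⊥ ∩ F_2^n`, with
`y = (1/Γ(x_1),…,1/Γ(x_n))`, viewed inside `F^n` where `F` has characteristic `2`
(so that the prime subfield `F_2` consists of `0` and `1`). -/
def GoppaSet {F : Type*} [Field F] {n : ℕ} (r : ℕ) (x : Fin n → F) (Γ : Polynomial F) :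
    Set (Fin n → F) :=
  { c | (∀ t, c t = 0 ∨ c t = 1) ∧
      ∀ d ∈ GRSset r x (fun t => (Γ.eval (x t))⁻¹), ∑ t, c t * d t = 0 }

/-- The dual, within `F_2^n`, of the binary Goppa code `Goppa(x,Γ)`. -/
def GoppaDualSet {F : Type*} [Field F] {n : ℕ} (r : ℕ) (x : Fin n → F) (Γ : Polynomial F) :
    Set (Fin n → F) :=
  { d | (∀ t, d t = 0 ∨ d t = 1) ∧ ∀ c ∈ GoppaSet r x Γ, ∑ t, c t * d t = 0 }

/-!
In characteristic `2` a symmetric zero-diagonal `M` lies in `C_mat(A)` as soon as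
`∑_{p<p'} M p p' • (a_p ⋆ a_p')` lies in the span of the squares `a_p ⋆ a_p`; these squares
are again the vectors of `A` (`a_(j,i) ⋆ a_(j,i) = a_(j+1,i)`, indices mod `m`), so that span
is `C`. For block-diagonal `M` only products inside one block occur, and
`a_(j,i) ⋆ a_(j,i') = (x^(i+i') y²)^(2^j)`. As `Γ` is squarefree, `F[z]/(Γ)` is a finite
reduced ring of characteristic `2`, hence perfect, so `z^(i+i') = f Γ + h²` with
`deg f, deg h < r`. Using `Γ(x) y = 1` this gives `x^(i+i') y² = f(x) y + (h(x) y)²`, and the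
`2^j`-th powers of both summands are combinations of `a_(j,·)` and `a_(j+1,·)`.
-/

open Polynomial

theorem Squarefree.exists_dvd_sub_pow_char {F : Type*} [Field F] [Finite F] (p : ℕ)
    [Fact p.Prime] [CharP F p] {Γ : F[X]} (hΓ : Squarefree Γ) (P : F[X]) :
    ∃ h : F[X], h.degree < Γ.degree ∧ Γ ∣ P - h ^ p := by
  by_cases hu : IsUnit Γ
  · exact ⟨0, by simpa [bot_lt_iff_ne_bot] using hΓ.ne_zero, hu.dvd⟩
  have : Nontrivial (AdjoinRoot Γ) := AdjoinRoot.nontrivial Γ fun h0 =>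
    hu (isUnit_iff_degree_eq_zero.mpr h0)
  have : IsReduced (AdjoinRoot Γ) :=
    (Ideal.isRadical_iff_quotient_reduced _).mp (isRadical_iff_span_singleton.mp hΓ.isRadical)
  have : Module.Finite F (AdjoinRoot Γ) := (AdjoinRoot.powerBasis hΓ.ne_zero).finite
  have : Finite (AdjoinRoot Γ) := Module.finite_of_finite F
  have : CharP (AdjoinRoot Γ) p := charP_of_injective_algebraMap' F p
  obtain ⟨R, hR⟩ := (bijective_frobenius (AdjoinRoot Γ) p).2 (AdjoinRoot.mk Γ P)
  obtain ⟨H, rfl⟩ := AdjoinRoot.mk_surjective R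
  refine ⟨H % Γ, EuclideanDomain.mod_lt H hΓ.ne_zero, ?_⟩
  have hmod : AdjoinRoot.mk Γ (H % Γ) = AdjoinRoot.mk Γ H :=
    AdjoinRoot.mk_eq_mk.2 ⟨-(H / Γ), by rw [EuclideanDomain.mod_eq_sub_mul_div]; ring⟩
  rw [← AdjoinRoot.mk_eq_mk, map_pow, hmod, ← hR, frobenius_def]

theorem Squarefree.exists_mul_add_sq_eq {F : Type*} [Field F] [Finite F] [CharP F 2]
    {Γ : F[X]} (hΓ : Squarefree Γ) {P : F[X]} (hP : P.natDegree + 2 ≤ 2 * Γ.natDegree) :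
    ∃ f h : F[X], f.natDegree < Γ.natDegree ∧ h.natDegree < Γ.natDegree ∧
      f * Γ + h ^ 2 = P := by
  have : Fact (Nat.Prime 2) := ⟨Nat.prime_two⟩
  obtain ⟨h, hdeg, f, hf⟩ := hΓ.exists_dvd_sub_pow_char 2 P
  have hh : h.natDegree < Γ.natDegree := by
    rcases eq_or_ne h 0 with rfl | h0
    · rw [natDegree_zero]; omega
    · exact natDegree_lt_natDegree h0 hdeg
  refine ⟨f, h, ?_, hh, by linear_combination -hf⟩
  rcases eq_or_ne f 0 with rfl | f0
  · rw [natDegree_zero]; omega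
  have hsum : Γ.natDegree + f.natDegree ≤ 2 * Γ.natDegree - 2 := by
    rw [← natDegree_mul hΓ.ne_zero f0, ← hf]
    refine (natDegree_sub_le _ _).trans ?_
    rw [natDegree_pow]
    omega
  omega

theorem eval_mul_pow_char_pow_eq_sum {R : Type*} [CommRing R] (p : ℕ) [ExpChar R p]
    {P : R[X]} {r : ℕ} (hP : P.natDegree < r) (z y : R) (e : ℕ) :
    (P.eval z * y) ^ p ^ e =
      ∑ k ∈ Finset.range r, P.coeff k ^ p ^ e * (z ^ k * y) ^ p ^ e := by
  rw [eval_eq_sum_range' hP, Finset.sum_mul, sum_pow_char_pow]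
  exact Finset.sum_congr rfl fun k _ => by ring

theorem FiniteField.pow_pow_finRotate {K : Type*} [Field K] [Fintype K] {q m : ℕ}
    (hK : Fintype.card K = q ^ m) (z : K) (j : Fin m) :
    z ^ q ^ (finRotate m j : ℕ) = (z ^ q ^ (j : ℕ)) ^ q := by
  cases m with
  | zero => exact j.elim0
  | succ n =>
    rw [finRotate_apply, Fin.val_add_one]
    split_ifs with hj
    · rw [hj, Fin.val_last, pow_zero, pow_one, ← pow_mul, ← pow_succ, ← hK,
        FiniteField.pow_card]
    · rw [← pow_mul, ← pow_succ]

theorem mem_Cmat_of_two_eq_zero {F : Type*} [Field F] {n : ℕ} {ι : Type*} [Fintype ι]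
    [LinearOrder ι] {v : ι → Fin n → F} {M : Matrix ι ι F} (h2 : (2 : F) = 0)
    (hsq : ∀ p, v p ∈ Submodule.span F (Set.range fun q => schur (v q) (v q)))
    (hsym : ∀ p p', M p p' = M p' p) (hdiag : ∀ p, M p p = 0)
    (hmem : ∀ p p', M p p' ≠ 0 → schur (v p) (v p') ∈ Submodule.span F (Set.range v)) :
    M ∈ Cmat v := by
  set S := ∑ p, ∑ p', if p < p' then M p p' • schur (v p) (v p') else 0
  have hS : S ∈ Submodule.span F (Set.range v) := by
    refine Submodule.sum_mem _ fun p _ => Submodule.sum_mem _ fun p' _ => ?_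
    split_ifs
    · by_cases h0 : M p p' = 0
      · simp [h0]
      · exact Submodule.smul_mem _ _ (hmem p p' h0)
    · exact Submodule.zero_mem _
  have hspan : Submodule.span F (Set.range v) ≤
      Submodule.span F (Set.range fun q => schur (v q) (v q)) :=
    Submodule.span_le.2 (Set.range_subset_iff.2 hsq)
  obtain ⟨d, hd⟩ := (Submodule.mem_span_range_iff_exists_fun F).1 (hspan hS)
  refine ⟨fun p p' => if p = p' then d p else M p p', ?_, fun p p' hlt => ?_, fun p => ?_⟩
  · have hsplit : ∀ p p', (if p ≤ p' then (if p = p' then d p else M p p') •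
          schur (v p) (v p') else 0) = (if p < p' then M p p' • schur (v p) (v p') else 0) +
          if p = p' then d p • schur (v p) (v p') else 0 := by
      intro p p'
      rcases lt_trichotomy p p' with h | rfl | h
      · simp [h.le, h, h.ne]
      · simp
      · simp [h.not_ge, h.not_gt, h.ne']
    simp only [hsplit, Finset.sum_add_distrib, Finset.sum_ite_eq, Finset.mem_univ, if_true, hd]
    rw [← two_smul F, h2, zero_smul]
  · simp [hlt.ne, hsym p' p]
  · simp [hdiag, h2]

def canonicalFamily {F : Type*} [Field F] {n : ℕ} (m r : ℕ) (x y : Fin n → F) :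
    Fin m × Fin r → Fin n → F :=
  fun p t => (x t ^ (p.2 : ℕ) * y t) ^ 2 ^ (p.1 : ℕ)

section CanonicalFamily

variable {F : Type*} [Field F] {m r n : ℕ} (x y : Fin n → F)

theorem schur_canonicalFamily_self [Fintype F] (hF : Fintype.card F = 2 ^ m)
    (p : Fin m × Fin r) :
    schur (canonicalFamily m r x y p) (canonicalFamily m r x y p) =
      canonicalFamily m r x y ((finRotate m).prodCongr (Equiv.refl _) p) := by
  funext t
  simp only [schur, canonicalFamily, Equiv.prodCongr_apply, Prod.map, Equiv.refl_apply,
    FiniteField.pow_pow_finRotate hF, sq]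

theorem frobenius_eval_mul_mem_span_canonicalFamily [CharP F 2] {P : F[X]}
    (hP : P.natDegree < r) (j : Fin m) :
    (fun t => (P.eval (x t) * y t) ^ 2 ^ (j : ℕ)) ∈
      Submodule.span F (Set.range (canonicalFamily m r x y)) := by
  have hsum : (fun t => (P.eval (x t) * y t) ^ 2 ^ (j : ℕ)) =
      ∑ k : Fin r, P.coeff k ^ 2 ^ (j : ℕ) • canonicalFamily m r x y (j, k) := by
    funext t
    simp only [eval_mul_pow_char_pow_eq_sum 2 hP, Finset.sum_apply, Pi.smul_apply, smul_eq_mul,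
      canonicalFamily, Fin.sum_univ_eq_sum_range (fun k => P.coeff k ^ 2 ^ (j : ℕ) *
        (x t ^ k * y t) ^ 2 ^ (j : ℕ))]
  rw [hsum]
  exact Submodule.sum_mem _ fun k _ => Submodule.smul_mem _ _ (Submodule.subset_span ⟨_, rfl⟩)

theorem schur_canonicalFamily_mem_span [Fintype F] [CharP F 2] (hF : Fintype.card F = 2 ^ m)
    {Γ : F[X]} (hsf : Squarefree Γ) (hdeg : Γ.natDegree = r)
    (hy : ∀ t, Γ.eval (x t) * y t = 1) (j : Fin m) (i i' : Fin r) :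
    schur (canonicalFamily m r x y (j, i)) (canonicalFamily m r x y (j, i')) ∈
      Submodule.span F (Set.range (canonicalFamily m r x y)) := by
  have : Fact (Nat.Prime 2) := ⟨Nat.prime_two⟩
  subst hdeg
  obtain ⟨f, h, hf, hh, hfh⟩ := hsf.exists_mul_add_sq_eq (P := X ^ ((i : ℕ) + i'))
    (by rw [natDegree_X_pow]; omega)
  have hsplit : schur (canonicalFamily m Γ.natDegree x y (j, i))
      (canonicalFamily m Γ.natDegree x y (j, i')) =
      (fun t => (f.eval (x t) * y t) ^ 2 ^ (j : ℕ)) +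
        fun t => (h.eval (x t) * y t) ^ 2 ^ (finRotate m j : ℕ) := by
    funext t
    have hxy : x t ^ ((i : ℕ) + i') * y t ^ 2 =
        f.eval (x t) * y t + (h.eval (x t) * y t) ^ 2 := by
      have := congrArg (eval (x t)) hfh
      simp only [eval_add, eval_mul, eval_pow, eval_X] at this
      linear_combination -(y t ^ 2) * this + f.eval (x t) * y t * hy t
    calc (x t ^ (i : ℕ) * y t) ^ 2 ^ (j : ℕ) * (x t ^ (i' : ℕ) * y t) ^ 2 ^ (j : ℕ)
        = (x t ^ ((i : ℕ) + i') * y t ^ 2) ^ 2 ^ (j : ℕ) := by rw [← mul_pow]; ring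
      _ = (f.eval (x t) * y t + (h.eval (x t) * y t) ^ 2) ^ 2 ^ (j : ℕ) := by rw [hxy]
      _ = (f.eval (x t) * y t) ^ 2 ^ (j : ℕ) + ((h.eval (x t) * y t) ^ 2) ^ 2 ^ (j : ℕ) :=
        add_pow_char_pow _ _ _ _
      _ = (f.eval (x t) * y t) ^ 2 ^ (j : ℕ) +
            (h.eval (x t) * y t) ^ 2 ^ (finRotate m j : ℕ) := by
        rw [FiniteField.pow_pow_finRotate hF, pow_right_comm]
  rw [hsplit]
  exact Submodule.add_mem _ (frobenius_eval_mul_mem_span_canonicalFamily x y hf j)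
    (frobenius_eval_mul_mem_span_canonicalFamily x y hh _)

end CanonicalFamily

theorem cmat_goppa_block_diagonal_general
    (m r nn : ℕ)
    (F : Type*) [Field F] [Fintype F] (hF : Fintype.card F = 2 ^ m)
    (x : Fin nn → F)
    (Γ : Polynomial F) (hsf : Squarefree Γ) (hdeg : Γ.natDegree = r)
    (hΓ : ∀ t, Γ.eval (x t) ≠ 0)
    (y : Fin nn → F) (hy : y = fun t => (Γ.eval (x t))⁻¹)
    (A : Fin m × Fin r → Fin nn → F)
    (hA : A = fun p t => (x t ^ (p.2 : ℕ) * y t) ^ 2 ^ (p.1 : ℕ)) :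
    ∀ M : Matrix (Fin m × Fin r) (Fin m × Fin r) F,
      (∀ p p', M p p' = M p' p) →
      (∀ p, M p p = 0) →
      (∀ p p', p.1 ≠ p'.1 → M p p' = 0) →
      M ∈ Cmat A := by
  intro M hsym hdiag hblock
  have : Fact (Nat.Prime 2) := ⟨Nat.prime_two⟩
  have : CharP F 2 := charP_of_card_eq_prime_pow hF
  have hΓy : ∀ t, Γ.eval (x t) * y t = 1 := fun t => by rw [hy]; exact mul_inv_cancel₀ (hΓ t)
  subst hA
  refine mem_Cmat_of_two_eq_zero (v := canonicalFamily m r x y) CharTwo.two_eq_zero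
    (fun p => ?_) hsym hdiag ?_
  · rw [← Equiv.apply_symm_apply ((finRotate m).prodCongr (Equiv.refl _)) p,
      ← schur_canonicalFamily_self x y hF]
    exact Submodule.subset_span ⟨_, rfl⟩
  · rintro ⟨j, i⟩ ⟨j', i'⟩ hM
    obtain rfl : j = j' := by_contra fun hne => hM (hblock _ _ hne)
    exact schur_canonicalFamily_mem_span x y hF hsf hdeg hΓy j i i'

/-- Let `q = 2`, `F = F_{2^m}`, `Γ` a square-free polynomial of degree
`r` with `Γ(x_i) ≠ 0` for all `i`, `y = (1/Γ(x_1),…,1/Γ(x_n))`, and assume the canonical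
family `A` built from `x` and `y` is a basis of the `F_{2^m}`-linear span of
`Goppa(x,Γ)^⊥` inside `F_{2^m}^n`. Then every symmetric `rm×rm` matrix with zero
diagonal which is block-diagonal with `m` diagonal blocks of size `r×r` (i.e. whose
entry at `((j,i),(j',i'))` vanishes whenever `j ≠ j'`) belongs to `C_mat(A)`. -/
theorem cmat_goppa_block_diagonal
    (m r nn : ℕ) (hm : 0 < m) (hr : 0 < r) (hn : 0 < nn)
    (F : Type*) [Field F] [Fintype F] (hF : Fintype.card F = 2 ^ m)
    (x : Fin nn → F) (hx : Function.Injective x)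
    (Γ : Polynomial F) (hsf : Squarefree Γ) (hdeg : Γ.natDegree = r)
    (hΓ : ∀ t, Γ.eval (x t) ≠ 0)
    (y : Fin nn → F) (hy : y = fun t => (Γ.eval (x t))⁻¹)
    (A : Fin m × Fin r → Fin nn → F)
    (hA : A = fun p t => (x t ^ (p.2 : ℕ) * y t) ^ 2 ^ (p.1 : ℕ))
    (hAind : LinearIndependent F A)
    (hAspan : Submodule.span F (Set.range A) = Submodule.span F (GoppaDualSet r x Γ)) :
    ∀ M : Matrix (Fin m × Fin r) (Fin m × Fin r) F,
      (∀ p p', M p p' = M p' p) →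
      (∀ p, M p p = 0) →
      (∀ p p', p.1 ≠ p'.1 → M p p' = 0) →
      M ∈ Cmat A :=
  cmat_goppa_block_diagonal_general m r nn F hF x Γ hsf hdeg hΓ y hy A hA
end

section
/- Let K be a field of characteristic 2 and let M be an s×s symmetric matrix over K with zero diagonal (a skew-symmetric matrix in characteristic 2). Then M has rank at most 2 if and only if for all indices 1 ≤ i < j < k < l ≤ s one has M_{i,j}M_{k,l} + M_{i,k}M_{j,l} + M_{i,l}M_{j,k} = 0. Consequently, the common zero set of the Pfaffian quadrics m_{i,j}m_{k,l}+m_{i,k}m_{j,l}+m_{i,l}m_{j,k} (1 ≤ i<j<k<l ≤ s) on the space of skew-symmetric s×s matrices coincides with the common zero set of all 4×4 minors. -/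
/-!
A symmetric zero-diagonal `4 × 4` matrix in characteristic `2` has determinant equal to the
square of its Pfaffian `m₀₁m₂₃ + m₀₂m₁₃ + m₀₃m₁₂`, so a Pfaffian quadric of `M` vanishes
exactly when the corresponding principal `4 × 4` minor does. Principal minors are unchanged
by permuting their indices and vanish when an index repeats, so vanishing of the quadrics at
increasing indices gives vanishing at all indices. Then, for `M i j ≠ 0`, the quadric at
`(i, j, k, l)` expresses `M k l` through rows `i` and `j`, so `M` factors through `K²` and
has rank at most `2`; conversely rank at most `2` kills every `4 × 4` minor.
-/

open Matrix

namespace Matrix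

theorem det_submatrix_eq_zero_of_rank_lt {K m n o : Type*} [Field K] [Fintype n] [Fintype o]
    [DecidableEq o] (A : Matrix m n K) (hA : A.rank < Fintype.card o) (f : o → m) (g : o → n) :
    (A.submatrix f g).det = 0 := by
  by_contra hdet
  have hrank : (A.submatrix f g).rank = Fintype.card o :=
    rank_of_isUnit _ ((isUnit_iff_isUnit_det _).mpr (isUnit_iff_ne_zero.mpr hdet))
  have := rank_submatrix_le A f g
  omega

theorem det_submatrix_self_eq_zero_of_forall_strictMono {R ι : Type*} [CommRing R]
    [LinearOrder ι] {n : ℕ} (A : Matrix ι ι R)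
    (hA : ∀ v : Fin n → ι, StrictMono v → (A.submatrix v v).det = 0) (v : Fin n → ι) :
    (A.submatrix v v).det = 0 := by
  by_cases hv : v.Injective
  · have hsorted : StrictMono (v ∘ Tuple.sort v) :=
      (Tuple.monotone_sort v).strictMono_of_injective (hv.comp (Tuple.sort v).injective)
    rw [← det_submatrix_equiv_self (Tuple.sort v)]
    exact hA _ hsorted
  · obtain ⟨a, b, hab, hne⟩ : ∃ a b, v a = v b ∧ a ≠ b := by
      simpa [Function.Injective] using hv
    exact det_zero_of_row_eq hne (by ext c; simp [hab])

/-- The Pfaffian `m_{ij}m_{kl} - m_{ik}m_{jl} + m_{il}m_{jk}` with the signs it has in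
characteristic `2`. -/
def pfaffianQuadric {R ι : Type*} [Mul R] [Add R] (M : Matrix ι ι R) (i j k l : ι) : R :=
  M i j * M k l + M i k * M j l + M i l * M j k

section CharTwo

variable {R : Type*} [CommRing R] [CharP R 2]

theorem det_fin_four_of_symm_zero_diag (a b c d e f : R) :
    !![0, a, b, c; a, 0, d, e; b, d, 0, f; c, e, f, 0].det = (a * f + b * e + c * d) ^ 2 := by
  rw [det_succ_row_zero, Fin.sum_univ_four]
  simp only [det_fin_three, of_apply, cons_val', cons_val_fin_one, submatrix_apply, Fin.succAbove,
    cons_val, Fin.reduceSucc, Fin.reduceCastSucc, Fin.reduceLT, ↓reduceIte, Fin.coe_ofNat_eq_mod]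
  linear_combination
    -2 * (a * b * e * f + a * c * d * f + b * c * d * e) * CharTwo.two_eq_zero (R := R)

theorem det_fin_four_eq_pfaffianQuadric_sq {N : Matrix (Fin 4) (Fin 4) R} (hN : N.IsSymm)
    (hdiag : ∀ i, N i i = 0) : N.det = pfaffianQuadric N 0 1 2 3 ^ 2 := by
  have hentries : N = !![0, N 0 1, N 0 2, N 0 3; N 0 1, 0, N 1 2, N 1 3;
      N 0 2, N 1 2, 0, N 2 3; N 0 3, N 1 3, N 2 3, 0] := by
    ext i j
    fin_cases i <;> fin_cases j <;> simp [hdiag] <;> exact hN.apply _ _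
  rw [hentries, det_fin_four_of_symm_zero_diag]
  rfl

variable [IsReduced R] {ι : Type*} {M : Matrix ι ι R}

theorem pfaffianQuadric_eq_zero_iff_det_submatrix (hM : M.IsSymm) (hdiag : ∀ i, M i i = 0)
    (i j k l : ι) :
    pfaffianQuadric M i j k l = 0 ↔ (M.submatrix ![i, j, k, l] ![i, j, k, l]).det = 0 := by
  rw [det_fin_four_eq_pfaffianQuadric_sq (hM.submatrix _) (fun _ => hdiag _), sq_eq_zero_iff]
  rfl

theorem pfaffianQuadric_eq_zero_of_forall_lt [LinearOrder ι] (hM : M.IsSymm)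
    (hdiag : ∀ i, M i i = 0)
    (h : ∀ i j k l, i < j → j < k → k < l → pfaffianQuadric M i j k l = 0) (i j k l : ι) :
    pfaffianQuadric M i j k l = 0 := by
  rw [pfaffianQuadric_eq_zero_iff_det_submatrix hM hdiag]
  refine det_submatrix_self_eq_zero_of_forall_strictMono M (fun v hv => ?_) _
  rw [det_fin_four_eq_pfaffianQuadric_sq (hM.submatrix v) (fun _ => hdiag _), sq_eq_zero_iff]
  exact h _ _ _ _ (hv (by decide : (0 : Fin 4) < 1)) (hv (by decide : (1 : Fin 4) < 2))
    (hv (by decide : (2 : Fin 4) < 3))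

end CharTwo

theorem rank_le_two_of_pfaffianQuadric_eq_zero {K ι : Type*} [Field K] [CharP K 2] [Fintype ι]
    {M : Matrix ι ι K} (h : ∀ i j k l, pfaffianQuadric M i j k l = 0) : M.rank ≤ 2 := by
  obtain rfl | ⟨i, j, hij⟩ : M = 0 ∨ ∃ i j, M i j ≠ 0 := by
    by_contra! hM
    exact hM.1 (by ext i j; exact hM.2 i j)
  · simp
  have hfactor : M = (of fun k => ![M j k / M i j, M i k / M i j]) * of ![M i, M j] := by
    ext k l
    rw [mul_apply, Fin.sum_univ_two]
    simp only [of_apply, cons_val_zero, cons_val_one]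
    have hijkl : M i j * M k l + M i k * M j l + M i l * M j k = 0 := h i j k l
    field_simp
    linear_combination hijkl - (M j k * M i l + M i k * M j l) * CharTwo.two_eq_zero (R := K)
  rw [hfactor]
  exact (rank_mul_le_left _ _).trans ((rank_le_card_width _).trans_eq (Fintype.card_fin 2))

end Matrix

/-- Let `K` be a field of characteristic `2` and `M` an `s×s`
symmetric matrix over `K` with zero diagonal (a skew-symmetric matrix in
characteristic `2`). Then `M` has rank at most `2` iff all Pfaffian quadrics
`M_{i,j}M_{k,l} + M_{i,k}M_{j,l} + M_{i,l}M_{j,k}` (for `i < j < k < l`) vanish;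
consequently, the vanishing of all these Pfaffian quadrics is equivalent to the
vanishing of all `4×4` minors of `M`. -/
theorem skewSymmetric_rank_le_two_iff_pfaffians
    (K : Type*) [Field K] [CharP K 2] (s : ℕ)
    (M : Matrix (Fin s) (Fin s) K) (hsym : Mᵀ = M) (hdiag : ∀ i, M i i = 0) :
    (M.rank ≤ 2 ↔ ∀ i j k l : Fin s, i < j → j < k → k < l →
        M i j * M k l + M i k * M j l + M i l * M j k = 0) ∧
    ((∀ i j k l : Fin s, i < j → j < k → k < l →
        M i j * M k l + M i k * M j l + M i l * M j k = 0) ↔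
      ∀ f g : Fin 4 → Fin s, (M.submatrix f g).det = 0) := by
  have minors_of_rank : M.rank ≤ 2 → ∀ f g : Fin 4 → Fin s, (M.submatrix f g).det = 0 :=
    fun h f g => det_submatrix_eq_zero_of_rank_lt M (by simp only [Fintype.card_fin]; omega) f g
  have pfaffians_of_minors : (∀ f g : Fin 4 → Fin s, (M.submatrix f g).det = 0) →
      ∀ i j k l, i < j → j < k → k < l → pfaffianQuadric M i j k l = 0 :=
    fun h i j k l _ _ _ => (pfaffianQuadric_eq_zero_iff_det_submatrix hsym hdiag i j k l).2 (h _ _)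
  have rank_of_pfaffians :
      (∀ i j k l, i < j → j < k → k < l → pfaffianQuadric M i j k l = 0) → M.rank ≤ 2 :=
    fun h => rank_le_two_of_pfaffianQuadric_eq_zero <|
      pfaffianQuadric_eq_zero_of_forall_lt hsym hdiag h
  exact ⟨⟨fun h => pfaffians_of_minors (minors_of_rank h), rank_of_pfaffians⟩,
    ⟨fun h => minors_of_rank (rank_of_pfaffians h), pfaffians_of_minors⟩⟩
end

section
/- Let q be a prime power and let B = (b_1,…,b_r, b_1^{(q)},…,b_r^{(q)}, …, b_1^{(q^{m−1})},…,b_r^{(q^{m−1})}) be an ordered basis of an rm-dimensional linear code C ⊆ F_{q^m}^n, where v^{(q)} denotes the componentwise q-th power. Then the matrix code of relations C_mat(B) is stable under the operation M ↦ Sᵀ · M^{(q)} · S, where S is the right r-cyclic block shift matrix: for every M ∈ C_mat(B), also Sᵀ · M^{(q)} · S ∈ C_mat(B). -/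
open Matrix

/-- The right `r`-cyclic block shift matrix `S`: its block in position `(i,j)`
(with `r×r` blocks) is the identity if `j ≡ i + 1 (mod m)` and zero otherwise. -/
def shiftS (F : Type*) [Field F] (m r : ℕ) [NeZero m] :
    Matrix (Fin m × Fin r) (Fin m × Fin r) F :=
  Matrix.of fun p p' => if p'.1 = p.1 + 1 ∧ p'.2 = p.2 then 1 else 0

lemma ne_of_lt_lo {ι : Type*} [LinearOrder ι] {i j : ι} (h : i < j) : i ≠ j :=
  ne_of_lt h

open Finset in
lemma sum_tourn {ι : Type*} [Fintype ι] [LinearOrder ι] {F : Type*} [AddCommMonoid F]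
    (P : ι → ι → Prop) [DecidableRel P] (s : ι → ι → F)
    (hs : ∀ a b, s a b = s b a) (hrefl : ∀ a, P a a)
    (htot : ∀ a b, a ≠ b → (P a b ↔ ¬ P b a)) :
    ∑ a, ∑ b, (if P a b then s a b else 0) = ∑ a, ∑ b, (if a ≤ b then s a b else 0) := by
  have hre : ∀ (G : ι → ι → F), ∑ a, ∑ b, G a b = ∑ x : ι × ι, G x.1 x.2 := fun G =>
    (Fintype.sum_prod_type (f := fun x : ι × ι => G x.1 x.2)).symm
  rw [hre (fun a b => if P a b then s a b else 0), hre (fun a b => if a ≤ b then s a b else 0)]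
  rw [← Finset.sum_filter, ← Finset.sum_filter]
  refine Finset.sum_nbij' (fun x => if x.1 ≤ x.2 then x else x.swap)
    (fun z => if P z.1 z.2 then z else z.swap) ?_ ?_ ?_ ?_ ?_
  · intro x hx
    simp only [mem_filter, mem_univ, true_and] at hx ⊢
    split_ifs with h
    · exact h
    · exact le_of_not_ge h
  · intro z hz
    simp only [mem_filter, mem_univ, true_and] at hz ⊢
    split_ifs with h
    · exact h
    · have hne : z.1 ≠ z.2 := fun he => h (he ▸ hrefl z.1)
      exact (htot z.2 z.1 hne.symm).mpr (by simpa using h)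
  · intro x hx
    simp only [mem_filter, mem_univ, true_and] at hx
    by_cases hle : x.1 ≤ x.2
    · simp [hle, hx]
    · have hnP : ¬ P x.2 x.1 := (htot x.1 x.2 (fun he => hle (le_of_eq he))).mp hx
      simp [hle, hnP]
  · intro z hz
    simp only [mem_filter, mem_univ, true_and] at hz
    by_cases hP : P z.1 z.2
    · simp [hP, hz]
    · have hne : z.1 ≠ z.2 := fun he => hP (he ▸ hrefl z.1)
      have hlt : ¬ (z.2 ≤ z.1) := fun hc => hne (le_antisymm hz hc)
      simp [hP, hlt]
  · intro x hx
    by_cases h : x.1 ≤ x.2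
    · simp [h]
    · simp only [h, if_false]
      exact hs x.1 x.2

/-- The new coefficient function. -/
def shiftedCoef {ι : Type*} [DecidableEq ι] {F : Type*} [Field F]
    (c M : ι → ι → F) (e' : ι ≃ ι) (q : ℕ) : ι → ι → F :=
  fun i j => if i = j then (c (e'.symm i) (e'.symm i)) ^ q else (M (e'.symm i) (e'.symm j)) ^ q

/-- Generic form of the quadratic-relation computation, for an arbitrary linearly
ordered finite index type, so that all order instances are unambiguous. -/
lemma quad_rel_shift {ι : Type*} [Fintype ι] [LinearOrder ι] [DecidableEq ι]
    {F : Type*} [Field F]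
    (φ : F →+* F) (q : ℕ) (hφ : ∀ x : F, φ x = x ^ q)
    {n : ℕ} (b : ι → Fin n → F) (c : ι → ι → F) (M : ι → ι → F)
    (e' : ι ≃ ι)
    (hbq : ∀ a t, b (e' a) t = (b a t) ^ q)
    (Msymm : ∀ a b', M a b' = M b' a)
    (hoff : ∀ i j : ι, i < j → M i j = c i j)
    (hsum : (∑ i : ι, ∑ j : ι, (if i ≤ j then c i j • schur (b i) (b j) else 0)) = 0) :
    (∑ i : ι, ∑ j : ι, (if i ≤ j then
      shiftedCoef c M e' q i j • schur (b i) (b j) else 0)) = 0 := by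
  simp only [shiftedCoef]
  funext t
  simp only [Finset.sum_apply, Pi.smul_apply, smul_eq_mul,
    apply_ite (fun f : Fin n → F => f t), Pi.zero_apply, schur]
  have hT : ∑ i : ι, ∑ j : ι, (if i ≤ j then c i j * (b i t * b j t) else 0) = 0 := by
    have h := congrFun hsum t
    simpa [schur, Finset.sum_apply, Pi.smul_apply, smul_eq_mul,
      apply_ite (fun f : Fin n → F => f t)] using h
  have key : ∀ (G : ι → ι → F),
      ∑ i, ∑ j, G i j = ∑ a, ∑ a', G (e' a) (e' a') := by
    intro G
    exact ((Equiv.sum_comp e' (fun i => ∑ j, G i j)).symm).trans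
      (Finset.sum_congr rfl fun a _ => (Equiv.sum_comp e' (fun j => G (e' a) j)).symm)
  have step1 : ∀ a a' : ι,
      (if e' a ≤ e' a' then
        (if e' a = e' a' then (c (e'.symm (e' a)) (e'.symm (e' a))) ^ q
          else (M (e'.symm (e' a)) (e'.symm (e' a'))) ^ q) * (b (e' a) t * b (e' a') t) else 0)
      = (if e' a ≤ e' a' then
          (if a = a' then (c a a) ^ q else (M a a') ^ q) * ((b a t) ^ q * (b a' t) ^ q)
        else 0) := by
    intro a a'
    rw [e'.symm_apply_apply a, e'.symm_apply_apply a', hbq a t, hbq a' t]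
    refine if_congr Iff.rfl ?_ rfl
    exact congrArg₂ _ (if_congr e'.injective.eq_iff rfl rfl) rfl
  have hs' : ∀ a a' : ι,
      (if a = a' then (c a a) ^ q else (M a a') ^ q) * ((b a t) ^ q * (b a' t) ^ q)
      = (if a' = a then (c a' a') ^ q else (M a' a) ^ q) * ((b a' t) ^ q * (b a t) ^ q) := by
    intro a a'
    by_cases h : a = a'
    · subst h; rfl
    · rw [if_neg h, if_neg (Ne.symm h), Msymm a a', mul_comm ((b a t) ^ q)]
  have hrefl' : ∀ a : ι, e' a ≤ e' a := fun a => le_refl _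
  have htot' : ∀ a a' : ι, a ≠ a' → (e' a ≤ e' a' ↔ ¬ e' a' ≤ e' a) := by
    intro a a' hne
    have hτne : e' a ≠ e' a' := fun hEq => hne (e'.injective hEq)
    exact ⟨fun h1 hc => hτne (le_antisymm h1 hc), fun h1 => le_of_not_ge h1⟩
  have hφT : ∑ i : ι, ∑ j : ι,
      (if i ≤ j then (c i j) ^ q * ((b i t) ^ q * (b j t) ^ q) else 0) = 0 := by
    have h0 := congrArg φ hT
    rw [map_zero, map_sum] at h0
    simp only [map_sum] at h0
    simp only [apply_ite φ, map_zero, _root_.map_mul] at h0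
    simpa only [hφ] using h0
  refine ((key _).trans ?_)
  refine (Finset.sum_congr rfl fun a _ =>
    Finset.sum_congr rfl fun a' _ => step1 a a').trans ?_
  refine (sum_tourn (fun a a' => e' a ≤ e' a')
    (fun a a' => (if a = a' then (c a a) ^ q else (M a a') ^ q)
      * ((b a t) ^ q * (b a' t) ^ q)) hs' hrefl' htot').trans ?_
  refine Eq.trans ?_ hφT
  refine Finset.sum_congr rfl fun a _ => Finset.sum_congr rfl fun a' _ => ?_
  by_cases hle : a ≤ a'
  · rw [if_pos hle, if_pos hle]
    rcases eq_or_lt_of_le hle with hEq | hlt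
    · subst hEq
      rw [if_pos rfl]
    · rw [if_neg (ne_of_lt hlt), hoff a a' hlt]
  · rw [if_neg hle, if_neg hle]

/-- The cyclic block shift as an equivalence. -/
def shiftEquiv (m r : ℕ) [NeZero m] : (Fin m × Fin r) ≃ (Fin m × Fin r) where
  toFun x := (x.1 + 1, x.2)
  invFun x := (x.1 - 1, x.2)
  left_inv x := by simp
  right_inv x := by simp

/-- Let `q` be a prime power, `F = F_{q^m}`, and let
`B = (b_1,…,b_r, b_1^{(q)},…,b_r^{(q)}, …, b_1^{(q^{m−1})},…,b_r^{(q^{m−1})})` be an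
ordered basis of an `rm`-dimensional linear code `C ⊆ F^n`. Then `C_mat(B)` is stable
under `M ↦ Sᵀ · M^{(q)} · S`. -/
theorem cmat_stable_under_frobenius_shift
    (q m r n : ℕ) [NeZero m] (hq : ∃ p e : ℕ, p.Prime ∧ 0 < e ∧ q = p ^ e)
    (hr : 0 < r) (hn : 0 < n)
    (F : Type*) [Field F] [Fintype F] (hF : Fintype.card F = q ^ m)
    (β : Fin r → Fin n → F)
    (b : Fin m × Fin r → Fin n → F)
    (hb : b = fun p t => β p.2 t ^ q ^ (p.1 : ℕ))
    (hbind : LinearIndependent F b) :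
    ∀ M ∈ Cmat b,
      (shiftS F m r)ᵀ * (Matrix.of fun p p' => M p p' ^ q) * shiftS F m r ∈ Cmat b := by
  obtain ⟨p, e, hp, he, hqe⟩ := hq
  have hm : 0 < m := Nat.pos_of_ne_zero (NeZero.ne m)
  obtain ⟨k, hp', hck⟩ := FiniteField.card F (ringChar F)
  have hpp' : p = ringChar F := by
    have h1 : p ^ (e * m) = ringChar F ^ (k : ℕ) := by
      rw [pow_mul, ← hqe, ← hF, hck]
    have h2 : p ∣ ringChar F ^ (k : ℕ) :=
      h1 ▸ dvd_pow_self p (Nat.mul_ne_zero he.ne' hm.ne')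
    exact (Nat.prime_dvd_prime_iff_eq hp hp').mp (hp.dvd_of_dvd_pow h2)
  haveI : CharP F p := hpp' ▸ ringChar.charP F
  haveI : Fact p.Prime := ⟨hp⟩
  set φ : F →+* F := iterateFrobenius F p e with hφdef
  have hφ : ∀ x : F, φ x = x ^ q := fun x => by
    rw [hφdef, iterateFrobenius_def, ← hqe]
  have hpowm : ∀ x : F, x ^ q ^ m = x := fun x => by
    rw [← hF]; exact FiniteField.pow_card x
  intro M hM
  obtain ⟨c, hsum, hoff, hdiag⟩ := hM
  set e' : (Fin m × Fin r) ≃ (Fin m × Fin r) := shiftEquiv m r with he'def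
  -- entries of the transformed matrix
  have hS : ∀ (A : Matrix (Fin m × Fin r) (Fin m × Fin r) F) x y,
      (A * shiftS F m r) x y = A x (e'.symm y) := by
    intro A x y
    rw [Matrix.mul_apply, Finset.sum_eq_single (e'.symm y)]
    · have h1 : shiftS F m r (e'.symm y) y = 1 := by
        simp [shiftS, he'def, shiftEquiv, sub_add_cancel]
      rw [h1, mul_one]
    · intro z _ hz
      have h0 : shiftS F m r z y = 0 := by
        simp only [shiftS, of_apply, ite_eq_right_iff]
        rintro ⟨h1, h2⟩
        have hc1 : z.1 = y.1 - 1 := by rw [h1, add_sub_cancel_right]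
        exact absurd (show z = e'.symm y from Prod.ext hc1 h2.symm) hz
      rw [h0, mul_zero]
    · intro h; exact absurd (Finset.mem_univ _) h
  have hST : ∀ (A : Matrix (Fin m × Fin r) (Fin m × Fin r) F) x y,
      ((shiftS F m r)ᵀ * A) x y = A (e'.symm x) y := by
    intro A x y
    rw [Matrix.mul_apply, Finset.sum_eq_single (e'.symm x)]
    · have h1 : (shiftS F m r)ᵀ x (e'.symm x) = 1 := by
        simp [shiftS, he'def, shiftEquiv, transpose_apply, sub_add_cancel]
      rw [h1, one_mul]
    · intro z _ hz
      have h0 : (shiftS F m r)ᵀ x z = 0 := by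
        simp only [shiftS, transpose_apply, of_apply, ite_eq_right_iff]
        rintro ⟨h1, h2⟩
        have hc1 : z.1 = x.1 - 1 := by rw [h1, add_sub_cancel_right]
        exact absurd (show z = e'.symm x from Prod.ext hc1 h2.symm) hz
      rw [h0, zero_mul]
    · intro h; exact absurd (Finset.mem_univ _) h
  have hMe : ∀ x y, ((shiftS F m r)ᵀ * (Matrix.of fun p p' => M p p' ^ q) * shiftS F m r) x y
      = (M (e'.symm x) (e'.symm y)) ^ q := by
    intro x y
    rw [hS, hST]
    rfl
  -- symmetry of M
  have Msymm : ∀ a b', M a b' = M b' a := by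
    intro a b'
    rcases lt_trichotomy a b' with h | h | h
    · exact ((hoff a b' h).1).trans ((hoff a b' h).2).symm
    · rw [h]
    · exact ((hoff b' a h).2).trans ((hoff b' a h).1).symm
  -- the Frobenius twist of the basis
  have hbq : ∀ (a : Fin m × Fin r) (t : Fin n), b (e' a) t = (b a t) ^ q := by
    intro a t
    rw [hb]
    show β a.2 t ^ q ^ (((a.1 + 1 : Fin m)) : ℕ) = (β a.2 t ^ q ^ ((a.1 : ℕ))) ^ q
    rw [← pow_mul, ← pow_succ]
    have hv : (((a.1 + 1 : Fin m)) : ℕ) = ((a.1 : ℕ) + 1) % m := by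
      rw [Fin.add_def]
      simp only [Fin.val_one']
      rw [Nat.add_mod, Nat.mod_mod_of_dvd 1 (dvd_refl m), ← Nat.add_mod]
    rcases Nat.lt_or_ge ((a.1 : ℕ) + 1) m with hlt | hge
    · rw [hv, Nat.mod_eq_of_lt hlt]
    · have hme : (a.1 : ℕ) + 1 = m := by
        have := a.1.isLt; omega
      rw [hv, hme, Nat.mod_self, pow_zero, pow_one]
      exact (hpowm _).symm
  refine ⟨shiftedCoef c (fun x y => M x y) e' q, ?_, ?_, ?_⟩
  · exact quad_rel_shift φ q hφ b c (fun x y => M x y) e' hbq Msymm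
      (fun i j hij => (hoff i j hij).1) hsum
  · intro i j hij
    have hne : i ≠ j := ne_of_lt_lo hij
    constructor
    · rw [hMe i j, shiftedCoef, if_neg hne]
    · rw [hMe j i, Msymm (e'.symm j) (e'.symm i), shiftedCoef, if_neg hne]
  · intro i
    rw [hMe i i, hdiag (e'.symm i), mul_pow]
    have h2 : (2 : F) ^ q = 2 := by
      have h3 := hφ 2
      rw [map_ofNat] at h3
      exact h3.symm
    rw [h2, shiftedCoef, if_pos rfl]
end

section
/- Let q be a prime power and let B = (b_1,…,b_r, b_1^{(q)},…,b_r^{(q)}, …, b_1^{(q^{m−1})},…,b_r^{(q^{m−1})}) be an ordered basis of an rm-dimensional linear code C ⊆ F_{q^m}^n. Let M ∈ C_mat(B) have rank rm−1 and let v ∈ F_{q^m}^{rm} be a row vector with v·M = 0. Then for every i with 1 ≤ i ≤ m−1, the matrix (Sᵀ)^i · M^{(q^i)} · S^i belongs to C_mat(B), has rank rm−1, and satisfies (v^{(q^i)} · S^i) · ((Sᵀ)^i · M^{(q^i)} · S^i) = 0. -/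
open Matrix

/-!
Conjugation by `S ^ i` is reindexing along a permutation `ρ` of the index pairs, and
`M^(q^i)` is the image of `M` under the field automorphism `ψ : x ↦ x ^ q ^ i`. Both operations
preserve rank and send left kernel vectors to left kernel vectors. They also map `C_mat(B)` into
the relation code of the transformed family `z ↦ ψ (b (ρ z))`, and this family is `B` again:
since `x ^ q ^ m = x` on `F_{q^m}`, raising to the `q`-th power shifts the blocks of `B`
cyclically. The relation sum in `Cmat` runs over `i ≤ j` for a fixed order which `ρ` does not
respect, so reindexing uses that this sum, for symmetric coefficients, is a sum over unordered
pairs.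
-/

section UpperSum

variable {ι V : Type*} [Fintype ι] [LinearOrder ι] [AddCommMonoid V]

theorem sum_upper_eq_sum_sym2 (G : ι → ι → V) (hG : ∀ x y, G x y = G y x) :
    (∑ x, ∑ y, if x ≤ y then G x y else 0) = ∑ z : Sym2 ι, Sym2.lift ⟨G, hG⟩ z := by
  classical
  rw [← Sym2.sortEquiv.symm.sum_comp, ← Fintype.sum_prod_type', ← Finset.sum_filter,
    ← Finset.sum_subtype_eq_sum_filter, Finset.subtype_univ]
  rfl

theorem sum_upper_comp_perm (σ : Equiv.Perm ι) (G : ι → ι → V) (hG : ∀ x y, G x y = G y x) :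
    (∑ x, ∑ y, if x ≤ y then G (σ x) (σ y) else 0) = ∑ x, ∑ y, if x ≤ y then G x y else 0 := by
  let σ₂ : Sym2 ι ≃ Sym2 ι :=
    { toFun := Sym2.map σ
      invFun := Sym2.map σ.symm
      left_inv := fun z => by simp [Sym2.map_map]
      right_inv := fun z => by simp [Sym2.map_map] }
  rw [sum_upper_eq_sum_sym2 _ fun x y => hG _ _, sum_upper_eq_sum_sym2 G hG,
    ← σ₂.sum_comp (Sym2.lift ⟨G, hG⟩)]
  refine Fintype.sum_congr _ _ fun z => ?_
  induction z with | _ x y => rfl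

end UpperSum

section Cmat

variable {F : Type*} [Field F] {n : ℕ} {ι : Type*} [Fintype ι] [LinearOrder ι]
  {v : ι → Fin n → F} {M : Matrix ι ι F}

theorem map_mem_Cmat {K : Type*} [Field K] (hM : M ∈ Cmat v) (ψ : F →+* K) :
    M.map ψ ∈ Cmat fun i t => ψ (v i t) := by
  obtain ⟨c, hrel, hoff, hdiag⟩ := hM
  refine ⟨fun i j => ψ (c i j), ?_, fun i j hij => by simp [hoff i j hij],
    fun i => by simp [hdiag, map_ofNat]⟩
  funext t
  have := congrArg ψ (congrFun hrel t)
  simp only [Finset.sum_apply, Pi.zero_apply, map_sum, map_zero] at this ⊢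
  rw [← this]
  refine Fintype.sum_congr _ _ fun i => Fintype.sum_congr _ _ fun j => ?_
  split_ifs <;> simp [schur]

-- `Cmat` leaves the coefficients below the diagonal free; choosing them symmetric makes the
-- relation insensitive to the order on `ι`.
theorem exists_symm_coeffs_of_mem_Cmat (hM : M ∈ Cmat v) :
    ∃ c : ι → ι → F, (∀ i j, c i j = c j i) ∧
      (∑ i, ∑ j, if i ≤ j then c i j • schur (v i) (v j) else 0) = 0 ∧
      (∀ i j, i ≠ j → M i j = c i j) ∧ ∀ i, M i i = 2 * c i i := by
  obtain ⟨c, hrel, hoff, hdiag⟩ := hM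
  refine ⟨fun i j => if i ≤ j then c i j else c j i, fun i j => ?_, ?_, fun i j hij => ?_,
    fun i => by simp [hdiag]⟩
  · rcases lt_trichotomy i j with h | rfl | h
    · simp [h.le, h.not_ge]
    · rfl
    · simp [h.le, h.not_ge]
  · refine Eq.trans ?_ hrel
    refine Fintype.sum_congr _ _ fun i => Fintype.sum_congr _ _ fun j => ?_
    split_ifs with h
    · dsimp only
      rw [if_pos h]
    · rfl
  · rcases hij.lt_or_gt with h | h
    · simp [h.le, (hoff i j h).1]
    · simp [h.not_ge, (hoff j i h).2]

theorem submatrix_mem_Cmat (hM : M ∈ Cmat v) (σ : Equiv.Perm ι) :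
    M.submatrix σ σ ∈ Cmat fun i => v (σ i) := by
  obtain ⟨c, hsymm, hrel, hoff, hdiag⟩ := exists_symm_coeffs_of_mem_Cmat hM
  refine ⟨fun i j => c (σ i) (σ j), ?_, fun i j hij => ?_, fun i => hdiag (σ i)⟩
  · refine (sum_upper_comp_perm σ (fun i j => c i j • schur (v i) (v j)) fun i j => ?_).trans
      hrel
    rw [hsymm i j]
    exact congrArg _ (funext fun t => mul_comm _ _)
  · have hne : σ i ≠ σ j := σ.injective.ne hij.ne
    exact ⟨hoff _ _ hne, (hoff _ _ hne.symm).trans (hsymm _ _)⟩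

end Cmat

namespace Matrix

theorem mem_range_mulVecLin_map {K L : Type*} [CommSemiring K] [CommSemiring L] {m n : Type*}
    [Fintype n]
    (A : Matrix m n K) (ψ : K →+* L) {x : m → K} (hx : x ∈ LinearMap.range A.mulVecLin) :
    ψ ∘ x ∈ LinearMap.range (A.map ψ).mulVecLin := by
  obtain ⟨y, rfl⟩ := hx
  exact ⟨ψ ∘ y, funext fun i => (RingHom.map_mulVec ψ A y i).symm⟩

theorem rank_map_ringEquiv {K : Type*} [CommRing K] {m n : Type*} [Fintype n]
    (A : Matrix m n K) (ψ : K ≃+* K) : (A.map ψ).rank = A.rank := by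
  have hA : (A.map ψ).map ψ.symm = A := by ext; simp
  let j : LinearMap.range A.mulVecLin ≃+ LinearMap.range (A.map ψ).mulVecLin :=
    { toFun := fun x => ⟨ψ ∘ x.1, mem_range_mulVecLin_map A (ψ : K →+* K) x.2⟩
      invFun := fun y => ⟨ψ.symm ∘ y.1,
        by simpa only [RingEquiv.coe_toRingHom, hA] using
          mem_range_mulVecLin_map (A.map ψ) (ψ.symm : K →+* K) y.2⟩
      left_inv := fun x => by ext; simp
      right_inv := fun y => by ext; simp
      map_add' := fun x y => by ext; simp }
  exact congrArg Cardinal.toNat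
    (rank_eq_of_equiv_equiv ψ j ψ.bijective fun c x => by ext; simp [j]).symm

open Equiv

variable {n R : Type*} [Fintype n] [DecidableEq n]

theorem permMatrix_pow [Semiring R] (σ : Perm n) (k : ℕ) :
    (σ ^ k).permMatrix R = σ.permMatrix R ^ k := by
  induction k with
  | zero => simp
  | succ k ih => rw [pow_succ, permMatrix_mul, ih, pow_succ']

theorem transpose_permMatrix_mul_mul_permMatrix [NonAssocSemiring R] (σ : Perm n)
    (A : Matrix n n R) : (σ.permMatrix R)ᵀ * A * σ.permMatrix R = A.submatrix σ.symm σ.symm := by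
  rw [transpose_permMatrix, Perm.permMatrix, PEquiv.toMatrix_toPEquiv_mul, Perm.permMatrix,
    PEquiv.mul_toMatrix_toPEquiv, submatrix_submatrix]
  rfl

end Matrix

def blockShift (m r : ℕ) [NeZero m] : Equiv.Perm (Fin m × Fin r) :=
  Equiv.prodCongr (Equiv.addRight 1) (Equiv.refl _)

theorem shiftS_eq_permMatrix (F : Type*) [Field F] (m r : ℕ) [NeZero m] :
    shiftS F m r = (blockShift m r).permMatrix F := by
  ext p p'
  simp [shiftS, PEquiv.toMatrix_apply, blockShift, Prod.ext_iff, eq_comm]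

theorem shiftS_transpose_pow_mul_mul_shiftS_pow {F : Type*} [Field F] {m r : ℕ} [NeZero m]
    (A : Matrix (Fin m × Fin r) (Fin m × Fin r) F) (i : ℕ) :
    (shiftS F m r)ᵀ ^ i * A * shiftS F m r ^ i
      = A.submatrix (blockShift m r ^ i).symm (blockShift m r ^ i).symm := by
  rw [← transpose_pow, shiftS_eq_permMatrix, ← permMatrix_pow,
    transpose_permMatrix_mul_mul_permMatrix]

theorem vecMul_shiftS_pow {F : Type*} [Field F] {m r : ℕ} [NeZero m] (w : Fin m × Fin r → F)
    (i : ℕ) : w ᵥ* shiftS F m r ^ i = w ∘ (blockShift m r ^ i).symm := by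
  rw [shiftS_eq_permMatrix, ← permMatrix_pow, vecMul_permMatrix]

section Frobenius

variable {F : Type*} [Field F] [Fintype F] {q m : ℕ}

theorem pow_pow_eq_of_modEq (hF : Fintype.card F = q ^ m) (x : F) {a b : ℕ}
    (hab : a ≡ b [MOD m]) : x ^ q ^ a = x ^ q ^ b := by
  have hmod : ∀ a, x ^ q ^ a = x ^ q ^ (a % m) := fun a => by
    conv_lhs => rw [← Nat.mod_add_div a m, pow_add, pow_mul q m, pow_mul, ← hF,
      FiniteField.pow_card_pow]
  rw [hmod a, hmod b, hab]

theorem pow_pow_val_add_one [NeZero m] (hF : Fintype.card F = q ^ m) (x : F) (j : Fin m) :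
    x ^ q ^ ((j + 1 : Fin m) : ℕ) = (x ^ q ^ (j : ℕ)) ^ q := by
  rw [← pow_mul, ← pow_succ]
  refine pow_pow_eq_of_modEq hF x ?_
  rw [Fin.val_add]
  exact (Nat.mod_modEq _ _).trans ((Nat.mod_modEq 1 m).add_left _)

theorem pow_pow_blockShift_pow [NeZero m] {r n : ℕ} (hF : Fintype.card F = q ^ m)
    (β : Fin r → Fin n → F) (i : ℕ) (z : Fin m × Fin r) (t : Fin n) :
    β ((blockShift m r ^ i) z).2 t ^ q ^ (((blockShift m r ^ i) z).1 : ℕ)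
      = (β z.2 t ^ q ^ (z.1 : ℕ)) ^ q ^ i := by
  induction i with
  | zero => simp
  | succ i ih =>
    rw [pow_succ', Equiv.Perm.mul_apply, pow_succ, pow_mul, ← ih]
    exact pow_pow_val_add_one hF _ _

end Frobenius

theorem cmat_frobenius_shift_kernel_general
    (q m r n : ℕ) [NeZero m] (hq : ∃ p e : ℕ, p.Prime ∧ 0 < e ∧ q = p ^ e)
    (F : Type*) [Field F] [Fintype F] (hF : Fintype.card F = q ^ m)
    (β : Fin r → Fin n → F)
    (b : Fin m × Fin r → Fin n → F)
    (hb : b = fun p t => β p.2 t ^ q ^ (p.1 : ℕ))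
    (M : Matrix (Fin m × Fin r) (Fin m × Fin r) F)
    (hM : M ∈ Cmat b) (hrank : M.rank = r * m - 1)
    (v : Fin m × Fin r → F) (hv : Matrix.vecMul v M = 0) :
    ∀ i : ℕ, 1 ≤ i → i ≤ m - 1 →
      ((shiftS F m r)ᵀ ^ i * (Matrix.of fun p p' => M p p' ^ q ^ i) * shiftS F m r ^ i
          ∈ Cmat b) ∧
      ((shiftS F m r)ᵀ ^ i * (Matrix.of fun p p' => M p p' ^ q ^ i) *
          shiftS F m r ^ i).rank = r * m - 1 ∧
      Matrix.vecMul (Matrix.vecMul (fun p => v p ^ q ^ i) (shiftS F m r ^ i))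
          ((shiftS F m r)ᵀ ^ i * (Matrix.of fun p p' => M p p' ^ q ^ i) *
            shiftS F m r ^ i) = 0 := by
  intro i _ _
  obtain ⟨p, e, hp, -, rfl⟩ := hq
  have : Fact p.Prime := ⟨hp⟩
  have : CharP F p := charP_of_card_eq_prime_pow (hF.trans (pow_mul p e m).symm)
  set ψ := iterateFrobeniusEquiv F p (e * i)
  have hψ : ∀ x : F, x ^ (p ^ e) ^ i = ψ x := fun x => by
    rw [iterateFrobeniusEquiv_def, pow_mul]
  set ρ := (blockShift m r ^ i).symm
  have hMψ : (of fun a a' => M a a' ^ (p ^ e) ^ i) = M.map ψ := ext fun a a' => hψ _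
  have hvψ : (fun a => v a ^ (p ^ e) ^ i) = ψ ∘ v := funext fun a => hψ _
  have hbψ : b = fun z t => ψ (b (ρ z) t) := by
    subst hb
    funext z t
    rw [← hψ, ← pow_pow_blockShift_pow hF, Equiv.apply_symm_apply]
  rw [hMψ, hvψ, shiftS_transpose_pow_mul_mul_shiftS_pow, vecMul_shiftS_pow]
  refine ⟨?_, ?_, ?_⟩
  · rw [hbψ]
    exact submatrix_mem_Cmat (map_mem_Cmat hM ψ.toRingHom) ρ
  · rw [rank_submatrix, rank_map_ringEquiv, hrank]
  · have hker : (ψ ∘ v) ᵥ* M.map ψ = 0 := funext fun a => by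
      simpa [hv] using (RingHom.map_vecMul (ψ : F →+* F) M v a).symm
    simp only [submatrix_vecMul_equiv, Function.comp_assoc, Equiv.self_comp_symm,
      Function.comp_id, hker, Pi.zero_comp]

/-- Let `q` be a prime power, `F = F_{q^m}`, and let
`B = (b_1,…,b_r, b_1^{(q)},…,b_r^{(q)}, …, b_1^{(q^{m−1})},…,b_r^{(q^{m−1})})` be an
ordered basis of an `rm`-dimensional linear code `C ⊆ F^n`. If `M ∈ C_mat(B)` has rank
`rm − 1` and `v` is a row vector with `v·M = 0`, then for every `1 ≤ i ≤ m − 1` the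
matrix `(Sᵀ)^i · M^{(q^i)} · S^i` belongs to `C_mat(B)`, has rank `rm − 1`, and is
annihilated by the row vector `v^{(q^i)} · S^i`. -/
theorem cmat_frobenius_shift_kernel
    (q m r n : ℕ) [NeZero m] (hq : ∃ p e : ℕ, p.Prime ∧ 0 < e ∧ q = p ^ e)
    (hr : 0 < r) (hn : 0 < n)
    (F : Type*) [Field F] [Fintype F] (hF : Fintype.card F = q ^ m)
    (β : Fin r → Fin n → F)
    (b : Fin m × Fin r → Fin n → F)
    (hb : b = fun p t => β p.2 t ^ q ^ (p.1 : ℕ))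
    (hbind : LinearIndependent F b)
    (M : Matrix (Fin m × Fin r) (Fin m × Fin r) F)
    (hM : M ∈ Cmat b) (hrank : M.rank = r * m - 1)
    (v : Fin m × Fin r → F) (hv : Matrix.vecMul v M = 0) :
    ∀ i : ℕ, 1 ≤ i → i ≤ m - 1 →
      ((shiftS F m r)ᵀ ^ i * (Matrix.of fun p p' => M p p' ^ q ^ i) * shiftS F m r ^ i
          ∈ Cmat b) ∧
      ((shiftS F m r)ᵀ ^ i * (Matrix.of fun p p' => M p p' ^ q ^ i) *
          shiftS F m r ^ i).rank = r * m - 1 ∧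
      Matrix.vecMul (Matrix.vecMul (fun p => v p ^ q ^ i) (shiftS F m r ^ i))
          ((shiftS F m r)ᵀ ^ i * (Matrix.of fun p p' => M p p' ^ q ^ i) *
            shiftS F m r ^ i) = 0 :=
  cmat_frobenius_shift_kernel_general q m r n hq F hF β b hb M hM hrank v hv
end

section
/- Assume the m codes GRS_r(x,y)^{(q^0)}, …, GRS_r(x,y)^{(q^{m−1})} are in direct sum in F_{q^m}^n, and let B be an ordered basis of the F_{q^m}-span C of the canonical family A, with change-of-basis matrix P (so H_B = P·H_A). Let j ∈ {0,…,m−1} and let V_j ⊆ F_{q^m}^{rm} be an r-dimensional subspace every element of which corresponds to GRS_r(x,y)^{(q^j)} with respect to B. Then the image of the orthogonal complement V_j^⊥ = {w ∈ F_{q^m}^{rm} : Σ_t v_t w_t = 0 for all v ∈ V_j} under the map w ↦ w·H_B equals the sum Σ_{i ∈ {0,…,m−1}, i ≠ j} GRS_r(x,y)^{(q^i)}. -/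
open Matrix

/-- The Frobenius twist `GRS_k(x,y)^{(q^j)}` of the generalized Reed–Solomon code
`GRS_k(x,y)`, as a subset of `F^n`. -/
def GRSfrob {F : Type*} [Field F] {n : ℕ} (q k j : ℕ) (x y : Fin n → F) :
    Set (Fin n → F) :=
  { w | ∃ P : Polynomial F, P.degree < (k : WithBot ℕ) ∧
      w = fun t => (y t * P.eval (x t)) ^ q ^ j }

lemma GRS_span_eq {F : Type*} [Field F] {nn : ℕ} (p e q r : ℕ) (hp : p.Prime)
    [CharP F p] (hqe : q = p ^ e) (hr : 0 < r) (x y : Fin nn → F) (i : ℕ) :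
    Submodule.span F (GRSfrob q r i x y)
      = Submodule.span F (Set.range fun k : Fin r =>
          (fun t => (x t ^ (k : ℕ) * y t) ^ q ^ i : Fin nn → F)) := by
  haveI : Fact p.Prime := ⟨hp⟩
  have hqi : q ^ i = p ^ (e * i) := by rw [hqe, ← pow_mul]
  apply le_antisymm
  · rw [Submodule.span_le]
    rintro w ⟨Q, hdeg, rfl⟩
    have hnd : Q.natDegree < r := by
      rcases eq_or_ne Q 0 with h0 | h0
      · simpa [h0] using hr
      · exact (Polynomial.natDegree_lt_iff_degree_lt h0).2 (by exact_mod_cast hdeg)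
    have hfun : (fun t => (y t * Q.eval (x t)) ^ q ^ i)
        = ∑ k : Fin r, (Q.coeff (k : ℕ)) ^ q ^ i •
            (fun t => (x t ^ (k : ℕ) * y t) ^ q ^ i : Fin nn → F) := by
      funext t
      rw [Finset.sum_apply]
      simp only [Pi.smul_apply, smul_eq_mul]
      rw [Polynomial.eval_eq_sum_range' hnd, ← Fin.sum_univ_eq_sum_range
        (fun k => Q.coeff k * x t ^ k) r, Finset.mul_sum, hqi, sum_pow_char_pow]
      refine Finset.sum_congr rfl fun k _ => ?_
      rw [← hqi]
      rw [mul_pow, mul_pow, mul_pow]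
      ring
    rw [hfun]
    exact Submodule.sum_mem _ fun k _ =>
      Submodule.smul_mem _ _ (Submodule.subset_span ⟨k, rfl⟩)
  · rw [Submodule.span_le]
    rintro w ⟨k, rfl⟩
    apply Submodule.subset_span
    refine ⟨Polynomial.X ^ (k : ℕ), ?_, ?_⟩
    · rw [Polynomial.degree_X_pow]
      exact_mod_cast k.isLt
    · funext t
      rw [Polynomial.eval_pow, Polynomial.eval_X, mul_comm]

/-- Assume the `m` codes `GRS_r(x,y)^{(q^i)}` are in direct sum, let
`B` be an ordered basis of the span `C` of the canonical family `A` with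
change-of-basis matrix `P`, and let `V_j` be an `r`-dimensional subspace of
`F_{q^m}^{rm}` all of whose elements correspond to `GRS_r(x,y)^{(q^j)}` with respect to
`B`. Then the image of the orthogonal complement `V_j^⊥` under `w ↦ w·H_B` equals
`∑_{i ≠ j} GRS_r(x,y)^{(q^i)}`. -/
theorem Vperp_image_eq_sum_of_GRS
    (q m r nn : ℕ) [NeZero m] (hq : ∃ p e : ℕ, p.Prime ∧ 0 < e ∧ q = p ^ e)
    (hr : 0 < r) (hn : 0 < nn)
    (F : Type*) [Field F] [Fintype F] (hF : Fintype.card F = q ^ m)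
    (x y : Fin nn → F) (hx : Function.Injective x) (hy : ∀ t, y t ≠ 0)
    (A : Fin m × Fin r → Fin nn → F)
    (hA : A = fun p t => (x t ^ (p.2 : ℕ) * y t) ^ q ^ (p.1 : ℕ))
    (hAind : LinearIndependent F A)
    (hds : ∀ c : Fin m → Fin nn → F,
      (∀ j : Fin m, c j ∈ GRSfrob q r (j : ℕ) x y) → ∑ j, c j = 0 → ∀ j, c j = 0)
    (b : Fin m × Fin r → Fin nn → F)
    (hbind : LinearIndependent F b)
    (hbspan : Submodule.span F (Set.range b) = Submodule.span F (Set.range A))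
    (HA HB : Matrix (Fin m × Fin r) (Fin nn) F)
    (hHA : HA = Matrix.of fun p t => A p t)
    (hHB : HB = Matrix.of fun p t => b p t)
    (P : Matrix (Fin m × Fin r) (Fin m × Fin r) F)
    (hPunit : IsUnit P) (hPchange : HB = P * HA)
    (j : Fin m)
    (Vj : Submodule F (Fin m × Fin r → F))
    (hVdim : Module.finrank F Vj = r)
    (hVcorr : ∀ u ∈ Vj,
      Matrix.vecMul u ((P⁻¹)ᵀ * P⁻¹ * HB) ∈ GRSfrob q r (j : ℕ) x y) :
    { z | ∃ w : Fin m × Fin r → F,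
        (∀ v ∈ Vj, ∑ t, v t * w t = 0) ∧ z = Matrix.vecMul w HB }
      = ↑(⨆ (i : Fin m) (_ : i ≠ j), Submodule.span F (GRSfrob q r (i : ℕ) x y)) := by
  classical
  obtain ⟨p, e, hp, he, hqe⟩ := hq
  -- characteristic
  haveI hcharF : CharP F p := by
    obtain ⟨p', hp'⟩ := CharP.exists F
    haveI := hp'
    obtain ⟨n, hp'prime, hcardp⟩ := FiniteField.card F p'
    have hpp' : p = p' := by
      have hdvd : p ∣ p' ^ (n : ℕ) := by
        rw [← hcardp, hF, hqe, ← pow_mul]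
        exact dvd_pow_self p (Nat.mul_ne_zero he.ne' (NeZero.ne m))
      exact (Nat.prime_dvd_prime_iff_eq hp hp'prime).mp (hp.dvd_of_dvd_pow hdvd)
    rw [hpp']; exact hp'
  have hPdet : IsUnit P.det := (Matrix.isUnit_iff_isUnit_det P).mp hPunit
  have hPinvP : P⁻¹ * P = 1 := Matrix.nonsing_inv_mul P hPdet
  have hPPinv : P * P⁻¹ = 1 := Matrix.mul_nonsing_inv P hPdet
  have hHAapply : ∀ v : Fin m × Fin r → F,
      Matrix.vecMul v HA = ∑ pp, v pp • A pp := by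
    intro v
    funext t
    rw [hHA]
    simp [Matrix.vecMul, dotProduct, Finset.sum_apply]
  have hspan : ∀ i : Fin m, Submodule.span F (GRSfrob q r (i : ℕ) x y)
      = Submodule.span F (Set.range fun k : Fin r => A (i, k)) := by
    intro i
    rw [GRS_span_eq p e q r hp hqe hr x y (i : ℕ), hA]
  -- coefficients of block-j combinations vanish off block j
  have hblock : ∀ v : Fin m × Fin r → F,
      (∑ pp, v pp • A pp) ∈ Submodule.span F (Set.range fun k : Fin r => A (j, k)) →
      ∀ pp, pp.1 ≠ j → v pp = 0 := by
    intro v hv pp hpp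
    obtain ⟨c, hc⟩ := (Submodule.mem_span_range_iff_exists_fun F).mp hv
    set d : Fin m × Fin r → F := fun pp => if pp.1 = j then c pp.2 else 0 with hd
    have hsum : ∑ pp, d pp • A pp = ∑ k : Fin r, c k • A (j, k) := by
      rw [Fintype.sum_prod_type]
      rw [Fintype.sum_eq_single j (fun i hi => ?_)]
      · refine Finset.sum_congr rfl fun k _ => ?_
        simp [hd]
      · apply Finset.sum_eq_zero
        intro k _
        simp [hd, hi]
    have h0 : ∑ pp, (v pp - d pp) • A pp = 0 := by
      simp only [sub_smul, Finset.sum_sub_distrib]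
      rw [hsum, hc, sub_self]
    have := Fintype.linearIndependent_iff.mp hAind (fun pp => v pp - d pp) h0 pp
    have hdpp : d pp = 0 := by simp [hd, hpp]
    rw [hdpp, sub_zero] at this
    exact this
  -- image of Vj under (P⁻¹)ᵀ lies in the block-j coordinate subspace
  have hUj : ∀ u ∈ Vj, ∀ pp, pp.1 ≠ j → Matrix.vecMul u (P⁻¹)ᵀ pp = 0 := by
    intro u hu
    have h1 := hVcorr u hu
    have h2 : (P⁻¹)ᵀ * P⁻¹ * HB = (P⁻¹)ᵀ * HA := by
      rw [hPchange, Matrix.mul_assoc, ← Matrix.mul_assoc P⁻¹ P HA, hPinvP,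
        Matrix.one_mul]
    rw [h2, ← Matrix.vecMul_vecMul] at h1
    apply hblock
    rw [← hHAapply]
    rw [← hspan j]
    exact Submodule.subset_span h1
  -- the block-j coordinate subspace
  let Uj : Submodule F (Fin m × Fin r → F) :=
  { carrier := {v | ∀ pp, pp.1 ≠ j → v pp = 0}
    add_mem' := fun ha hb pp hpp => by simp [ha pp hpp, hb pp hpp]
    zero_mem' := fun pp hpp => rfl
    smul_mem' := fun c v hv pp hpp => by simp [hv pp hpp] }
  have hUjmem : ∀ v : Fin m × Fin r → F,
      v ∈ Uj ↔ ∀ pp : Fin m × Fin r, pp.1 ≠ j → v pp = 0 := fun v => Iff.rfl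
  -- complement coordinate subspace (supported off block j)
  let Sset : Submodule F (Fin m × Fin r → F) :=
  { carrier := {v | ∀ pp, pp.1 = j → v pp = 0}
    add_mem' := fun ha hb pp hpp => by simp [ha pp hpp, hb pp hpp]
    zero_mem' := fun pp hpp => rfl
    smul_mem' := fun c v hv pp hpp => by simp [hv pp hpp] }
  have hSmem : ∀ v : Fin m × Fin r → F,
      v ∈ Sset ↔ ∀ pp : Fin m × Fin r, pp.1 = j → v pp = 0 := fun v => Iff.rfl
  -- Uj has dimension r
  let E : (Fin r → F) →ₗ[F] (Fin m × Fin r → F) :=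
  { toFun := fun s pp => if pp.1 = j then s pp.2 else 0
    map_add' := by
      intro a b; funext pp; by_cases h : pp.1 = j <;> simp [h]
    map_smul' := by
      intro c a; funext pp; by_cases h : pp.1 = j <;> simp [h] }
  have hErange : LinearMap.range E = Uj := by
    apply le_antisymm
    · rintro _ ⟨s, rfl⟩ pp hpp
      simp [E, hpp]
    · intro v hv
      refine ⟨fun k => v (j, k), ?_⟩
      funext pp
      by_cases h : pp.1 = j
      · obtain ⟨i, k⟩ := pp
        simp only at h
        subst h
        simp [E]
      · simp [E, h, (hv pp h).symm]
  have hEinj : Function.Injective E := by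
    intro a b hab
    funext k
    have := congrFun hab (j, k)
    simpa [E] using this
  have hUr : Module.finrank F Uj = r := by
    rw [← hErange, LinearMap.finrank_range_of_inj hEinj, Module.finrank_fin_fun]
  -- columns of P at block-j indices belong to Vj
  set f := Matrix.vecMulLinear ((P⁻¹)ᵀ) with hf
  have hfinv : ∀ v : Fin m × Fin r → F,
      Matrix.vecMul (Matrix.vecMul v (P⁻¹)ᵀ) Pᵀ = v := by
    intro v
    rw [Matrix.vecMul_vecMul, ← Matrix.transpose_mul, hPPinv, Matrix.transpose_one,
      Matrix.vecMul_one]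
  have hfinj : Function.Injective f := by
    intro a b hab
    have h3 : Matrix.vecMul (Matrix.vecMul a (P⁻¹)ᵀ) Pᵀ
        = Matrix.vecMul (Matrix.vecMul b (P⁻¹)ᵀ) Pᵀ := by
      simp only [hf, Matrix.vecMulLinear_apply] at hab
      rw [hab]
    rwa [hfinv, hfinv] at h3
  have hmaple : Vj.map f ≤ Uj := by
    rintro _ ⟨u, hu, rfl⟩
    intro pp hpp
    exact hUj u hu pp hpp
  have hrankmap : Module.finrank F (Vj.map f) = r := by
    rw [← (Submodule.equivMapOfInjective f hfinj Vj).finrank_eq]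
    exact hVdim
  have heqU : Vj.map f = Uj :=
    Submodule.eq_of_le_of_finrank_le hmaple (by rw [hrankmap, hUr])
  have key : ∀ pp : Fin m × Fin r, pp.1 = j → (fun t => P t pp) ∈ Vj := by
    intro pp hpp
    have hmem : (Pi.single pp (1 : F)) ∈ Uj := by
      intro pp' hpp'
      apply Pi.single_eq_of_ne
      rintro rfl
      exact hpp' hpp
    rw [← heqU] at hmem
    obtain ⟨u, hu, huu⟩ := hmem
    have hform : Matrix.vecMul (Pi.single pp (1 : F)) Pᵀ = fun t => P t pp := by
      funext t
      rw [Matrix.single_one_vecMul]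
      rfl
    have : (fun t => P t pp) = u := by
      rw [← hform, ← huu]
      simp only [hf, Matrix.vecMulLinear_apply]
      exact hfinv u
    rwa [this]
  -- the two sides
  have hsub : (⨆ (i : Fin m) (_ : i ≠ j),
      Submodule.span F (GRSfrob q r (i : ℕ) x y)) = Sset.map (Matrix.vecMulLinear HA) := by
    apply le_antisymm
    · refine iSup_le fun i => iSup_le fun hij => ?_
      rw [hspan i, Submodule.span_le]
      rintro _ ⟨k, rfl⟩
      refine ⟨Pi.single (i, k) (1 : F), ?_, ?_⟩
      · intro pp hpp
        apply Pi.single_eq_of_ne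
        rintro rfl
        exact hij hpp
      · rw [Matrix.vecMulLinear_apply, hHAapply]
        rw [Fintype.sum_eq_single (i, k) (fun pp hpp => by
          rw [Pi.single_eq_of_ne hpp, zero_smul])]
        rw [Pi.single_eq_same, one_smul]
    · rintro _ ⟨v, hv, rfl⟩
      rw [Matrix.vecMulLinear_apply, hHAapply]
      refine Submodule.sum_mem _ fun pp _ => ?_
      by_cases h : pp.1 = j
      · rw [hv pp h, zero_smul]
        exact Submodule.zero_mem _
      · refine Submodule.smul_mem _ _ ?_
        refine Submodule.mem_iSup_of_mem pp.1 (Submodule.mem_iSup_of_mem h ?_)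
        rw [hspan pp.1]
        exact Submodule.subset_span ⟨pp.2, rfl⟩
  rw [hsub]
  ext z
  simp only [Set.mem_setOf_eq, SetLike.mem_coe, Submodule.mem_map]
  constructor
  · rintro ⟨w, hw, rfl⟩
    refine ⟨Matrix.vecMul w P, ?_, ?_⟩
    · intro pp hpp
      have h1 := hw _ (key pp hpp)
      have h2 : Matrix.vecMul w P pp = ∑ t, P t pp * w t := by
        simp [Matrix.vecMul, dotProduct, mul_comm]
      rw [h2, h1]
    · rw [Matrix.vecMulLinear_apply, Matrix.vecMul_vecMul, ← hPchange]
  · rintro ⟨v, hv, rfl⟩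
    refine ⟨Matrix.vecMul v P⁻¹, ?_, ?_⟩
    · intro u hu
      have hswap : ∑ t, u t * Matrix.vecMul v P⁻¹ t
          = ∑ pp, v pp * Matrix.vecMul u (P⁻¹)ᵀ pp := by
        simp only [Matrix.vecMul, dotProduct, Matrix.transpose_apply,
          Finset.mul_sum]
        rw [Finset.sum_comm]
        exact Finset.sum_congr rfl fun s _ => Finset.sum_congr rfl fun t _ => by ring
      rw [hswap]
      refine Finset.sum_eq_zero fun pp _ => ?_
      by_cases h : pp.1 = j
      · rw [hv pp h, zero_mul]
      · rw [hUj u hu pp h, mul_zero]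
    · rw [Matrix.vecMulLinear_apply, hPchange, Matrix.vecMul_vecMul,
        ← Matrix.mul_assoc, hPinvP, Matrix.one_mul]
end
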